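/- arXiv:2307.08361 — 6 statements merged into one kernel-verified Lean document; each statement's English description precedes it below -/
import Mathlib

section
/- Let s, r, t be positive integers and set T = Σ_{k=0}^{s} C(r, k) (sum of binomial coefficients). Let F = (V, E) be a finite r-uniform hypergraph, i.e. E is a family of r-element subsets of the finite set V. Then there exist a subfamily E* ⊆ E with |E*| ≥ (t·r·2^{2r+1})^{−T−1}·|E| and a colouring c : V → {1, …, r} such that: (i) c(F) = {1, …, r} for every F ∈ E* (each edge of E* is rainbow); and (ii) there is a family H of subsets of {1, …, r}, each of size at most s, such that for every set e ⊆ {1, …, r} with |e| ≤ s: if e ∈ H then for every F ∈ E* there exist t pairwise distinct edges F₁, …, F_t ∈ E* with c(F ∩ F_i) ⊇ e for each i; and if e ∉ H then for all distinct F, F' ∈ E*, c(F ∩ F') does not contain e. -/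
open SimpleGraph

/-- The average degree of a graph: `2 e(G) / |V(G)|`. -/
noncomputable def avgDeg {V : Type*} (G : SimpleGraph V) : ℝ :=
  2 * (G.edgeSet.ncard : ℝ) / (Nat.card V : ℝ)

/-- The maximum degree of a graph on a finite vertex type. -/
noncomputable def maxDeg {V : Type*} [Fintype V] (G : SimpleGraph V) : ℕ :=
  Finset.univ.sup fun v => (G.neighborSet v).ncard

/-- `G` contains no (not necessarily induced) copy of the complete bipartite graph `K_{s,s}`. -/
def KssFree {V : Type*} (G : SimpleGraph V) (s : ℕ) : Prop :=
  ¬ ∃ S T : Finset V, Disjoint S T ∧ S.card = s ∧ T.card = s ∧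
      ∀ a ∈ S, ∀ b ∈ T, G.Adj a b

/-- `G` contains no (not necessarily induced) copy of the four-cycle `C₄`:
no two distinct vertices have two distinct common neighbours. -/
def C4Free {V : Type*} (G : SimpleGraph V) : Prop :=
  ¬ ∃ a b c d : V, a ≠ b ∧ c ≠ d ∧ G.Adj a c ∧ G.Adj b c ∧ G.Adj a d ∧ G.Adj b d

/-- `G` contains no triangle. -/
def C3Free {V : Type*} (G : SimpleGraph V) : Prop :=
  ¬ ∃ a b c : V, G.Adj a b ∧ G.Adj b c ∧ G.Adj a c

/-- `G` is bipartite: the vertex set can be split into two independent sets. -/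
def IsBipartite {V : Type*} (G : SimpleGraph V) : Prop :=
  ∃ f : V → Bool, ∀ ⦃a b : V⦄, G.Adj a b → f a ≠ f b

/-- `G` is `d`-degenerate: every nonempty (induced) subgraph has a vertex of degree at most `d`. -/
def IsDegenerate {V : Type*} (G : SimpleGraph V) (d : ℝ) : Prop :=
  ∀ S : Finset V, S.Nonempty → ∃ v ∈ S, ((G.neighborSet v ∩ ↑S).ncard : ℝ) ≤ d

/-- The number of edges of `G` with one endpoint in `A` and one in `B`. -/
noncomputable def eBetween {V : Type*} (G : SimpleGraph V) (A B : Set V) : ℕ :=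
  {e : Sym2 V | e ∈ G.edgeSet ∧ ∃ a ∈ A, ∃ b ∈ B, e = s(a, b)}.ncard

/-!
A uniformly random colouring `V → Fin r` makes an `r`-set rainbow with probability
`r!/r^r ≥ 4^{-r}`, so some colouring keeps a `4^{-r}` fraction of `E` rainbow.

Call a family settled if each colour set `e` with `|e| ≤ s` is either covered by no intersection
of two distinct edges, or covered by the intersections of every edge with at least `t` edges.
Deleting an edge of small `e`-degree together with its `e`-neighbours costs at most `t` edges and
enlarges the largest `e`-independent subfamily, so greedy deletion either keeps half of the family
as a settled family, or yields, for some `e` in the kernel, an `e`-independent subfamily of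
relative size `1/(t 2^{r+1})`. On that subfamily `e` has left the kernel for good, so after at most
`∑_{k ≤ s} C(r, k)` rounds the family is settled.
-/

open Finset Nat

lemma pow_self_le_four_pow_mul_factorial (r : ℕ) : r ^ r ≤ 4 ^ r * r ! := by
  have hexp : (r : ℝ) ^ r / r ! ≤ Real.exp r :=
    Real.pow_div_factorial_le_exp _ (Nat.cast_nonneg r) r
  have hexp_le : Real.exp r ≤ 4 ^ r := by
    rw [← Real.exp_one_pow]
    gcongr
    exact Real.exp_one_lt_d9.le.trans (by norm_num)
  rw [div_le_iff₀ (by positivity)] at hexp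
  exact_mod_cast hexp.trans (mul_le_mul_of_nonneg_right hexp_le (by positivity))

section Colouring
variable {V : Type} [Fintype V] [DecidableEq V] {r : ℕ}

lemma le_card_rainbow_colourings {F : Finset V} (hF : #F = r) :
    r ! * r ^ (Fintype.card V - r) ≤ #{c : V → Fin r | F.image c = univ} := by
  let glue : (F ≃ Fin r) × ({x // x ∉ F} → Fin r) → V → Fin r :=
    fun p => (Equiv.piEquivPiSubtypeProd (· ∈ F) fun _ => Fin r).symm (p.1, p.2)
  have glue_injective : glue.Injective :=
    (Equiv.injective _).comp (Equiv.coe_fn_injective.prodMap Function.injective_id)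
  have glue_rainbow : ∀ p, F.image (glue p) = univ := by
    intro p
    refine eq_univ_of_forall fun j => mem_image.2 ⟨p.1.symm j, (p.1.symm j).2, ?_⟩
    simp [glue, Equiv.piEquivPiSubtypeProd]
  calc r ! * r ^ (Fintype.card V - r)
      = Fintype.card ((F ≃ Fin r) × ({x // x ∉ F} → Fin r)) := by
        simp [Fintype.card_equiv (F.equivFinOfCardEq hF), Fintype.card_subtype_compl, hF]
    _ = #(univ.image glue) := (card_image_of_injective _ glue_injective).symm
    _ ≤ _ := card_le_card
      (image_subset_iff.2 fun p _ => mem_filter.2 ⟨mem_univ _, glue_rainbow p⟩)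

lemma exists_colouring_card_le_four_pow_mul_card_rainbow (hr : 0 < r) (E : Finset (Finset V))
    (hunif : ∀ F ∈ E, #F = r) :
    ∃ c : V → Fin r, #E ≤ 4 ^ r * #{F ∈ E | F.image c = univ} := by
  obtain rfl | ⟨F₀, hF₀⟩ := E.eq_empty_or_nonempty
  · exact ⟨fun _ => ⟨0, hr⟩, by simp⟩
  have hrn : r ≤ Fintype.card V := hunif F₀ hF₀ ▸ card_le_univ F₀
  have double_count : ∑ c : V → Fin r, #{F ∈ E | F.image c = univ}
      = ∑ F ∈ E, #{c : V → Fin r | F.image c = univ} :=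
    sum_card_bipartiteAbove_eq_sum_card_bipartiteBelow _
  have averaging :
      ∑ _c : V → Fin r, #E ≤ ∑ c : V → Fin r, 4 ^ r * #{F ∈ E | F.image c = univ} := by
    rw [sum_const, Finset.card_univ, Fintype.card_fun, Fintype.card_fin, ← mul_sum, double_count,
      smul_eq_mul, ← Nat.pow_sub_mul_pow r hrn]
    calc r ^ (Fintype.card V - r) * r ^ r * #E
        ≤ r ^ (Fintype.card V - r) * (4 ^ r * r !) * #E := by
          gcongr; exact pow_self_le_four_pow_mul_factorial r
      _ = 4 ^ r * (#E • (r ! * r ^ (Fintype.card V - r))) := by rw [smul_eq_mul]; ring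
      _ ≤ 4 ^ r * ∑ F ∈ E, #{c : V → Fin r | F.image c = univ} :=
          Nat.mul_le_mul_left _ (card_nsmul_le_sum _ _ _ fun F hF =>
            le_card_rainbow_colourings (hunif F hF))
  have : NeZero r := ⟨hr.ne'⟩
  obtain ⟨c, -, hc⟩ := exists_le_of_sum_le univ_nonempty averaging
  exact ⟨c, hc⟩

end Colouring

section Cleaning
variable {V : Type} [DecidableEq V] {r : ℕ} (s t : ℕ) (c : V → Fin r)

def IsIndepFor (e : Finset (Fin r)) (G : Finset (Finset V)) : Prop :=
  ∀ F ∈ G, ∀ F' ∈ G, F ≠ F' → ¬ e ⊆ (F ∩ F').image c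

open scoped Classical in
noncomputable def indepNumFor (e : Finset (Fin r)) (G : Finset (Finset V)) : ℕ :=
  ({I ∈ G.powerset | IsIndepFor c e I}).sup card

open scoped Classical in
noncomputable def kernel (G : Finset (Finset V)) : Finset (Finset (Fin r)) :=
  {e | #e ≤ s ∧ ¬ IsIndepFor c e G}

def IsSettled (G : Finset (Finset V)) : Prop :=
  ∀ e : Finset (Fin r), #e ≤ s →
    IsIndepFor c e G ∨ ∀ F ∈ G, t ≤ #{F' ∈ G | e ⊆ (F ∩ F').image c}

variable {s t c} {e : Finset (Fin r)} {F : Finset V} {G G' I : Finset (Finset V)}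

lemma IsIndepFor.mono (h : IsIndepFor c e G) (hG' : G' ⊆ G) : IsIndepFor c e G' :=
  fun F hF F' hF' => h F (hG' hF) F' (hG' hF')

lemma IsIndepFor.insert (h : IsIndepFor c e I) (hF : ∀ F' ∈ I, ¬ e ⊆ (F ∩ F').image c) :
    IsIndepFor c e (insert F I) := by
  intro A hA B hB hAB
  rcases mem_insert.1 hA with rfl | hAI <;> rcases mem_insert.1 hB with rfl | hBI
  · exact absurd rfl hAB
  · exact hF B hBI
  · rw [inter_comm]; exact hF A hAI
  · exact h A hAI B hBI hAB

lemma le_indepNumFor (hI : I ⊆ G) (h : IsIndepFor c e I) : #I ≤ indepNumFor c e G := by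
  classical
  exact le_sup (f := card) (mem_filter.2 ⟨mem_powerset.2 hI, h⟩)

lemma exists_isIndepFor_card_eq_indepNumFor (c : V → Fin r) (e : Finset (Fin r))
    (G : Finset (Finset V)) : ∃ I ⊆ G, IsIndepFor c e I ∧ #I = indepNumFor c e G := by
  classical
  have hempty : ∅ ∈ {I ∈ G.powerset | IsIndepFor c e I} :=
    mem_filter.2 ⟨empty_mem_powerset G, by simp [IsIndepFor]⟩
  obtain ⟨I, hI, hmax⟩ := exists_mem_eq_sup _ ⟨∅, hempty⟩ card
  obtain ⟨hIG, hIe⟩ := mem_filter.1 hI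
  exact ⟨I, mem_powerset.1 hIG, hIe, by rw [indepNumFor, hmax]⟩

lemma indepNumFor_mono (hG' : G' ⊆ G) : indepNumFor c e G' ≤ indepNumFor c e G := by
  obtain ⟨I, hI, hIe, hcard⟩ := exists_isIndepFor_card_eq_indepNumFor c e G'
  exact hcard ▸ le_indepNumFor (hI.trans hG') hIe

lemma indepNumFor_lt (hG' : G' ⊆ G) (hF : F ∈ G) (hFG' : F ∉ G')
    (hsep : ∀ F' ∈ G', ¬ e ⊆ (F ∩ F').image c) :
    indepNumFor c e G' < indepNumFor c e G := by
  obtain ⟨I, hI, hIe, hcard⟩ := exists_isIndepFor_card_eq_indepNumFor c e G'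
  calc indepNumFor c e G' < #(insert F I) := by
        rw [card_insert_of_notMem fun h => hFG' (hI h), hcard]; exact lt_add_one _
    _ ≤ _ := le_indepNumFor (insert_subset hF (hI.trans hG'))
        (hIe.insert fun F' hF' => hsep F' (hI hF'))

lemma mem_kernel : e ∈ kernel s c G ↔ #e ≤ s ∧ ¬ IsIndepFor c e G := by
  simp [kernel]

lemma isIndepFor_of_notMem_kernel (he : #e ≤ s) (h : e ∉ kernel s c G) : IsIndepFor c e G :=
  not_not.1 fun hdep => h (mem_kernel.2 ⟨he, hdep⟩)

lemma kernel_mono (hG' : G' ⊆ G) : kernel s c G' ⊆ kernel s c G := fun _ he =>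
  mem_kernel.2 ⟨(mem_kernel.1 he).1, fun h => (mem_kernel.1 he).2 (h.mono hG')⟩

lemma card_kernel_le_sum_choose (s : ℕ) (c : V → Fin r) (G : Finset (Finset V)) :
    #(kernel s c G) ≤ ∑ k ∈ range (s + 1), r.choose k := by
  calc #(kernel s c G)
        ≤ #((range (s + 1)).biUnion fun k => powersetCard k (univ : Finset (Fin r))) :=
        card_le_card fun e he => mem_biUnion.2
          ⟨#e, mem_range.2 (Nat.lt_succ_of_le (mem_kernel.1 he).1), mem_powersetCard_univ.2 rfl⟩
    _ ≤ ∑ k ∈ range (s + 1), #(powersetCard k (univ : Finset (Fin r))) := card_biUnion_le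
    _ = ∑ k ∈ range (s + 1), r.choose k := by simp

lemma card_kernel_le_two_pow : #(kernel s c G) ≤ 2 ^ r :=
  (card_le_univ _).trans (by simp)

lemma IsSettled.of_kernel_eq_empty (h : kernel s c G = ∅) : IsSettled s t c G := fun _ he =>
  Or.inl (isIndepFor_of_notMem_kernel he (h ▸ notMem_empty _))

lemma IsSettled.exists_subset_card_eq_of_mem_kernel (hG : IsSettled s t c G)
    (he : e ∈ kernel s c G) (hF : F ∈ G) :
    ∃ D ⊆ G, #D = t ∧ ∀ F' ∈ D, e ⊆ (F ∩ F').image c := by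
  obtain ⟨hes, hdep⟩ := mem_kernel.1 he
  obtain ⟨D, hD, hcard⟩ := Finset.exists_subset_card_eq ((hG e hes).resolve_left hdep F hF)
  exact ⟨D, hD.trans (filter_subset _ _), hcard, fun F' hF' => (mem_filter.1 (hD hF')).2⟩

/-- Each greedy step removes an edge `F` of `e`-degree `< t` with its `e`-neighbours; `F` then
extends every `e`-independent subfamily of what is left. -/
theorem exists_isSettled_card_le_add_sum_indepNumFor (s t : ℕ) (c : V → Fin r)
    (G : Finset (Finset V)) :
    ∃ Gs ⊆ G, IsSettled s t c Gs ∧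
      #G ≤ #Gs + t * ∑ e ∈ kernel s c G, indepNumFor c e G := by
  induction G using Finset.strongInduction with
  | H G ih =>
  by_cases hG : IsSettled s t c G
  · exact ⟨G, subset_rfl, hG, le_self_add⟩
  simp only [IsSettled, not_forall, not_or, not_le] at hG
  obtain ⟨e, he, hdep, F, hF, hdeg⟩ := hG
  set N := insert F {F' ∈ G | e ⊆ (F ∩ F').image c}
  have hNG : N ⊆ G := insert_subset hF (filter_subset _ _)
  have hN : #N ≤ t := (card_insert_le _ _).trans hdeg
  have hsep : ∀ F' ∈ G \ N, ¬ e ⊆ (F ∩ F').image c := fun F' hF' hsub =>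
    (mem_sdiff.1 hF').2 (mem_insert_of_mem (mem_filter.2 ⟨(mem_sdiff.1 hF').1, hsub⟩))
  have hsum : ∑ e ∈ kernel s c (G \ N), indepNumFor c e (G \ N)
      < ∑ e ∈ kernel s c G, indepNumFor c e G :=
    calc _ ≤ ∑ e ∈ kernel s c G, indepNumFor c e (G \ N) :=
          sum_le_sum_of_subset (kernel_mono sdiff_subset)
      _ < _ := sum_lt_sum (fun _ _ => indepNumFor_mono sdiff_subset)
          ⟨e, mem_kernel.2 ⟨he, hdep⟩,
            indepNumFor_lt sdiff_subset hF
              (fun h => (mem_sdiff.1 h).2 (mem_insert_self _ _)) hsep⟩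
  obtain ⟨Gs, hGs, hset, hcard⟩ := ih (G \ N) (sdiff_ssubset hNG (insert_nonempty _ _))
  refine ⟨Gs, hGs.trans sdiff_subset, hset, ?_⟩
  have := Nat.mul_le_mul_left t hsum
  rw [mul_add_one] at this
  have := card_sdiff_add_card_eq_card hNG
  omega

theorem exists_isSettled_card_le_pow_mul (s : ℕ) {t : ℕ} (ht : 0 < t) (c : V → Fin r)
    (k : ℕ) :
    ∀ G : Finset (Finset V), #(kernel s c G) ≤ k →
      ∃ Gs ⊆ G, IsSettled s t c Gs ∧ #G ≤ (t * 2 ^ (r + 1)) ^ k * #Gs := by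
  induction k with
  | zero =>
    intro G hG
    exact ⟨G, subset_rfl, .of_kernel_eq_empty (card_eq_zero.1 (Nat.le_zero.1 hG)), by simp⟩
  | succ k ih =>
  intro G hG
  obtain ⟨Gs, hGs, hset, hcard⟩ := exists_isSettled_card_le_add_sum_indepNumFor s t c G
  have hbase : 2 ≤ t * 2 ^ (r + 1) :=
    calc 2 ≤ 2 ^ (r + 1) := Nat.le_self_pow (by omega) 2
      _ ≤ t * 2 ^ (r + 1) := Nat.le_mul_of_pos_left _ ht
  by_cases hhalf : #G ≤ 2 * #Gs
  · refine ⟨Gs, hGs, hset, hhalf.trans (Nat.mul_le_mul_right _ ?_)⟩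
    exact hbase.trans (Nat.le_self_pow (by omega) _)
  have hne : (kernel s c G).Nonempty := by
    rw [nonempty_iff_ne_empty]
    rintro hempty
    simp only [hempty, sum_empty, mul_zero, add_zero] at hcard
    omega
  obtain ⟨e, he, hmax⟩ := exists_max_image _ (fun e => indepNumFor c e G) hne
  obtain ⟨I, hIG, hIe, hI⟩ := exists_isIndepFor_card_eq_indepNumFor c e G
  have heavy : #G ≤ t * 2 ^ (r + 1) * #I := by
    have := (sum_le_card_nsmul _ _ _ hmax).trans
      (Nat.mul_le_mul_right (indepNumFor c e G) card_kernel_le_two_pow)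
    have := Nat.mul_le_mul_left t this
    rw [pow_succ, hI]
    nlinarith
  have hkernel : kernel s c I ⊆ (kernel s c G).erase e := fun e' he' =>
    mem_erase.2 ⟨by rintro rfl; exact (mem_kernel.1 he').2 hIe, kernel_mono hIG he'⟩
  obtain ⟨Gs', hGs', hset', hcard'⟩ :=
    ih I ((card_le_card hkernel).trans (by rw [card_erase_of_mem he]; omega))
  refine ⟨Gs', hGs'.trans hIG, hset', ?_⟩
  calc #G ≤ t * 2 ^ (r + 1) * ((t * 2 ^ (r + 1)) ^ k * #Gs') := heavy.trans (by gcongr)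
    _ = (t * 2 ^ (r + 1)) ^ (k + 1) * #Gs' := by ring

end Cleaning

lemma zpow_neg_sub_one_mul_le {M n a b : ℕ} (hM : 0 < M) (h : a ≤ M ^ (n + 1) * b) :
    (M : ℝ) ^ (-(n : ℤ) - 1) * a ≤ b := by
  rw [show -(n : ℤ) - 1 = -((n + 1 : ℕ) : ℤ) by push_cast; ring, zpow_neg, zpow_natCast,
    inv_mul_le_iff₀ (by positivity)]
  exact_mod_cast h

theorem furedi_kernel_general (s r t : ℕ) (hr : 0 < r) (ht : 0 < t)
    (V : Type) [Fintype V] [DecidableEq V] (E : Finset (Finset V))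
    (hunif : ∀ F ∈ E, F.card = r) :
    ∃ (Estar : Finset (Finset V)) (c : V → Fin r),
      Estar ⊆ E ∧
      ((t * r * 2 ^ (2*r+1) : ℕ) : ℝ) ^
          (-((∑ k ∈ Finset.range (s+1), r.choose k : ℕ) : ℤ) - 1) * (E.card : ℝ)
        ≤ (Estar.card : ℝ) ∧
      (∀ F ∈ Estar, F.image c = Finset.univ) ∧
      ∃ H : Finset (Finset (Fin r)),
        (∀ e ∈ H, e.card ≤ s) ∧
        ∀ e : Finset (Fin r), e.card ≤ s →
          (e ∈ H → ∀ F ∈ Estar, ∃ D : Finset (Finset V), D ⊆ Estar ∧ D.card = t ∧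
              ∀ F' ∈ D, e ⊆ (F ∩ F').image c) ∧
          (e ∉ H → ∀ F ∈ Estar, ∀ F' ∈ Estar, F ≠ F' → ¬ e ⊆ (F ∩ F').image c) := by
  set T := ∑ k ∈ range (s + 1), r.choose k
  set M := t * r * 2 ^ (2 * r + 1)
  obtain ⟨c, hc⟩ := exists_colouring_card_le_four_pow_mul_card_rainbow hr E hunif
  obtain ⟨Estar, hsub, hset, hcard⟩ := exists_isSettled_card_le_pow_mul s ht c T
    {F ∈ E | F.image c = univ} (card_kernel_le_sum_choose s c _)
  have h2r : 2 ^ (2 * r + 1) ≤ M := Nat.le_mul_of_pos_left _ (Nat.mul_pos ht hr)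
  have h4M : 4 ^ r ≤ M :=
    calc 4 ^ r = 2 ^ (2 * r) := by rw [pow_mul]; norm_num
      _ ≤ M := (Nat.pow_le_pow_right two_pos (by omega)).trans h2r
  have htM : t * 2 ^ (r + 1) ≤ M :=
    calc t * 2 ^ (r + 1) ≤ t * (r * 2 ^ (2 * r + 1)) := Nat.mul_le_mul_left _
          ((Nat.pow_le_pow_right two_pos (by omega)).trans (Nat.le_mul_of_pos_left _ hr))
      _ = M := by ring
  refine ⟨Estar, c, hsub.trans (filter_subset _ _), zpow_neg_sub_one_mul_le (by positivity) ?_,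
    fun F hF => (mem_filter.1 (hsub hF)).2, kernel s c Estar, fun e he => (mem_kernel.1 he).1,
    fun e he => ⟨fun heH F hF => hset.exists_subset_card_eq_of_mem_kernel heH hF,
      fun heH => isIndepFor_of_notMem_kernel he heH⟩⟩
  calc #E ≤ 4 ^ r * ((t * 2 ^ (r + 1)) ^ T * #Estar) := hc.trans (by gcongr)
    _ ≤ M * (M ^ T * #Estar) := by gcongr
    _ = M ^ (T + 1) * #Estar := by ring

/-- Theorem 3.6 (variant of a theorem of Füredi): every `r`-uniform hypergraph has a large
`r`-partite subfamily `E*` in which the colour sets of pairwise intersections of edges are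
governed by an `s`-bounded "kernel" hypergraph `H` on the colours. -/
theorem furedi_kernel (s r t : ℕ) (hs : 0 < s) (hr : 0 < r) (ht : 0 < t)
    (V : Type) [Fintype V] [DecidableEq V] (E : Finset (Finset V))
    (hunif : ∀ F ∈ E, F.card = r) :
    ∃ (Estar : Finset (Finset V)) (c : V → Fin r),
      Estar ⊆ E ∧
      ((t * r * 2 ^ (2*r+1) : ℕ) : ℝ) ^
          (-((∑ k ∈ Finset.range (s+1), r.choose k : ℕ) : ℤ) - 1) * (E.card : ℝ)
        ≤ (Estar.card : ℝ) ∧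
      (∀ F ∈ Estar, F.image c = Finset.univ) ∧
      ∃ H : Finset (Finset (Fin r)),
        (∀ e ∈ H, e.card ≤ s) ∧
        ∀ e : Finset (Fin r), e.card ≤ s →
          (e ∈ H → ∀ F ∈ Estar, ∃ D : Finset (Finset V), D ⊆ Estar ∧ D.card = t ∧
              ∀ F' ∈ D, e ⊆ (F ∩ F').image c) ∧
          (e ∉ H → ∀ F ∈ Estar, ∀ F' ∈ Estar, F ≠ F' → ¬ e ⊆ (F ∩ F').image c) :=
  furedi_kernel_general s r t hr ht V E hunif
end

section
/- For every integer ℓ ≥ 0 and every integer k ≥ 1, every covered ℓ-bounded hypergraph H = (V, E) on a finite vertex set with |V| ≥ Σ_{l=0}^{ℓ} (k−1)^l has an induced pair of order k; that is, there exist sets A, B ⊆ V with |B| = k such that for each b ∈ B there exists an edge e ∈ E with A ∪ {b} ⊆ e, while there is no edge e ∈ E with A ⊆ e and |e ∩ B| > 1. -/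
open SimpleGraph

/-- A hypergraph (given by its edge family `E`) is covered if every vertex lies in an edge. -/
def Covered {V : Type*} (E : Set (Finset V)) : Prop := ∀ v : V, ∃ e ∈ E, v ∈ e

/-- A hypergraph is `ℓ`-bounded if every edge has at most `ℓ` vertices. -/
def BoundedBy {V : Type*} (E : Set (Finset V)) (ℓ : ℕ) : Prop := ∀ e ∈ E, e.card ≤ ℓ

/-- A hypergraph has an induced pair `(A, B)` of order `k` if `|B| = k`, every `b ∈ B`
lies in an edge containing `A`, but no edge contains `A` and more than one vertex of `B`. -/
def HasInducedPair {V : Type*} [DecidableEq V] (E : Set (Finset V)) (k : ℕ) : Prop :=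
  ∃ A B : Finset V, B.card = k ∧ (∀ b ∈ B, ∃ e ∈ E, A ⊆ e ∧ b ∈ e) ∧
    ¬ ∃ e ∈ E, A ⊆ e ∧ 1 < (e ∩ B).card
/-- Lemma 4.1: every covered `ℓ`-bounded hypergraph on at least `∑_{l=0}^{ℓ} (k-1)^l`
vertices has an induced pair of order `k`. -/
theorem covered_bounded_hypergraph_induced_pair (ℓ k : ℕ) (hk : 1 ≤ k)
    (V : Type) [Fintype V] [DecidableEq V] (E : Set (Finset V))
    (hcov : Covered E) (hbdd : BoundedBy E ℓ)
    (hcard : ∑ l ∈ Finset.range (ℓ + 1), (k - 1) ^ l ≤ Fintype.card V) :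
    HasInducedPair E k := by
  classical
  set km := k - 1 with hkm
  -- common neighbourhood
  set N : Finset V → Finset V := fun A =>
    Finset.univ.filter (fun v => v ∉ A ∧ ∃ e ∈ E, A ⊆ e ∧ v ∈ e) with hN
  have hNmem : ∀ A v, v ∈ N A ↔ v ∉ A ∧ ∃ e ∈ E, A ⊆ e ∧ v ∈ e := by
    intro A v; simp [hN]
  set S : ℕ → ℕ := fun m => ∑ l ∈ Finset.range (m + 1), km ^ l with hS
  have hS1 : ∀ m, 1 ≤ S m := by
    intro m
    have : km ^ 0 ≤ S m := Finset.single_le_sum (f := fun l => km ^ l)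
      (fun i _ => Nat.zero_le _) (by simp)
    simpa using this
  have hSsucc : ∀ m, S (m + 1) = km * S m + 1 := by
    intro m; simpa [hS] using geom_sum_succ (x := km) (n := m + 1)
  -- property P
  have hP0 : S ℓ ≤ (N ∅).card := by
    have hNuniv : N ∅ = Finset.univ := by
      ext v
      simp only [Finset.mem_univ, iff_true, hNmem]
      exact ⟨Finset.notMem_empty v, by
        obtain ⟨e, he, hve⟩ := hcov v
        exact ⟨e, he, Finset.empty_subset e, hve⟩⟩
    rw [hNuniv, Finset.card_univ]; exact hcard
  -- choose A of maximal cardinality with S (ℓ - |A|) ≤ |N A|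
  obtain ⟨A, hPA, hmax⟩ : ∃ A : Finset V, S (ℓ - A.card) ≤ (N A).card ∧
      ∀ A' : Finset V, S (ℓ - A'.card) ≤ (N A').card → A'.card ≤ A.card := by
    have hne : (Finset.univ.filter
        (fun A : Finset V => S (ℓ - A.card) ≤ (N A).card)).Nonempty := by
      refine ⟨∅, ?_⟩
      simp only [Finset.mem_filter, Finset.mem_univ, true_and, Finset.card_empty]
      simpa using hP0
    obtain ⟨A, hA, hAmax⟩ := Finset.exists_max_image _ (fun A : Finset V => A.card) hne
    simp only [Finset.mem_filter, Finset.mem_univ, true_and] at hA hAmax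
    exact ⟨A, hA, fun A' h => hAmax A' h⟩
  -- A has fewer than ℓ elements
  have hAlt : A.card < ℓ := by
    have hne : (N A).Nonempty := Finset.card_pos.mp (lt_of_lt_of_le (hS1 _) hPA)
    obtain ⟨v, hv⟩ := hne
    obtain ⟨hvA, e, heE, hAe, hve⟩ := (hNmem A v).mp hv
    have h1 : insert v A ⊆ e := Finset.insert_subset hve hAe
    have h2 : (insert v A).card ≤ e.card := Finset.card_le_card h1
    rw [Finset.card_insert_of_notMem hvA] at h2
    have := hbdd e heE
    omega
  set m := ℓ - A.card - 1 with hmdef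
  have hm : ℓ - A.card = m + 1 := by omega
  -- maximality bound
  have hbound : ∀ b ∈ N A, (N (insert b A)).card < S m := by
    intro b hb
    have hbA : b ∉ A := ((hNmem A b).mp hb).1
    by_contra h
    push_neg at h
    have hm' : ℓ - (insert b A).card = m := by
      rw [Finset.card_insert_of_notMem hbA]; omega
    have := hmax (insert b A) (by rw [hm']; exact h)
    rw [Finset.card_insert_of_notMem hbA] at this
    omega
  -- greedy selection
  have greedy : ∀ j : ℕ, ∀ T : Finset V, T ⊆ N A → j * S m + 1 ≤ T.card →
      ∃ B : Finset V, B ⊆ T ∧ B.card = j + 1 ∧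
        ∀ b ∈ B, ∀ b' ∈ B, b ≠ b' → ¬ ∃ e ∈ E, A ⊆ e ∧ b ∈ e ∧ b' ∈ e := by
    intro j
    induction j with
    | zero =>
      intro T hTsub hTcard
      have hTpos : 0 < T.card := by omega
      obtain ⟨b, hb⟩ := Finset.card_pos.mp hTpos
      refine ⟨{b}, Finset.singleton_subset_iff.mpr hb, by simp, ?_⟩
      intro x hx y hy hxy
      simp only [Finset.mem_singleton] at hx hy
      exact absurd (hx.trans hy.symm) hxy
    | succ j ih =>
      intro T hTsub hTcard
      have hTpos : 0 < T.card := by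
        have := hS1 m; nlinarith
      obtain ⟨b, hb⟩ := Finset.card_pos.mp hTpos
      have hbNA : b ∈ N A := hTsub hb
      set U : Finset V := insert b (N (insert b A)) with hU
      have hUcard : U.card ≤ S m := by
        have h1 : U.card ≤ (N (insert b A)).card + 1 := Finset.card_insert_le _ _
        have h2 := hbound b hbNA
        omega
      set T' : Finset V := T \ U with hT'
      have hT'card : j * S m + 1 ≤ T'.card := by
        have h1 : T.card ≤ T'.card + U.card := Finset.card_le_card_sdiff_add_card
        have : (j + 1) * S m = j * S m + S m := by ring
        omega
      obtain ⟨B', hB'sub, hB'card, hB'pair⟩ := ih T' (fun x hx => hTsub (Finset.mem_sdiff.mp hx).1) hT'card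
      have hbB' : b ∉ B' := by
        intro h
        have := hB'sub h
        rw [hT', Finset.mem_sdiff] at this
        exact this.2 (Finset.mem_insert_self b _)
      -- key: no edge containing A contains b and an element of T'
      have hkey : ∀ b' ∈ T', ¬ ∃ e ∈ E, A ⊆ e ∧ b ∈ e ∧ b' ∈ e := by
        rintro b' hb' ⟨e, heE, hAe, hbe, hb'e⟩
        rw [hT', Finset.mem_sdiff] at hb'
        have hb'NA : b' ∈ N A := hTsub hb'.1
        have hb'nb : b' ≠ b := by
          intro h; exact hb'.2 (h ▸ Finset.mem_insert_self b _)
        have : b' ∈ N (insert b A) := by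
          rw [hNmem]
          refine ⟨?_, e, heE, Finset.insert_subset hbe hAe, hb'e⟩
          simp only [Finset.mem_insert, not_or]
          exact ⟨hb'nb, ((hNmem A b').mp hb'NA).1⟩
        exact hb'.2 (Finset.mem_insert_of_mem this)
      refine ⟨insert b B', ?_, ?_, ?_⟩
      · exact Finset.insert_subset hb
          (hB'sub.trans (fun x hx => (Finset.mem_sdiff.mp hx).1))
      · rw [Finset.card_insert_of_notMem hbB', hB'card]
      · intro x hx y hy hxy
        rw [Finset.mem_insert] at hx hy
        rcases hx with rfl | hx
        · rcases hy with rfl | hy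
          · exact absurd rfl hxy
          · exact hkey y (hB'sub hy)
        · rcases hy with rfl | hy
          · rintro ⟨e, heE, hAe, hxe, hye⟩
            exact hkey x (hB'sub hx) ⟨e, heE, hAe, hye, hxe⟩
          · exact hB'pair x hx y hy hxy
  -- apply greedy with j = k - 1
  have hNAcard : km * S m + 1 ≤ (N A).card := by
    have := hPA
    rw [hm, hSsucc m] at this
    exact this
  obtain ⟨B, hBsub, hBcard, hBpair⟩ := greedy km (N A) le_rfl hNAcard
  refine ⟨A, B, by omega, ?_, ?_⟩
  · intro b hb
    obtain ⟨-, e, heE, hAe, hbe⟩ := (hNmem A b).mp (hBsub hb)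
    exact ⟨e, heE, hAe, hbe⟩
  · rintro ⟨e, heE, hAe, hlt⟩
    obtain ⟨a, ha, b, hb, hab⟩ := Finset.one_lt_card.mp hlt
    rw [Finset.mem_inter] at ha hb
    exact hBpair a ha.2 b hb.2 hab ⟨e, heE, hAe, ha.1, hb.1⟩
end

section
/- Let k, s ≥ 2 be integers, and let n be a positive integer and p ∈ [0,1] be such that max{ n²·p^s, n·(1−p⁴)^{(k²−3k−2)/4}, exp(−C(n,2)·p/4) } ≤ 1/2, where C(n,2) = n(n−1)/2. Then there exists an n-vertex finite simple graph G with average degree d(G) ≥ (n−1)·p/2 such that G is K_{s,s}-free and every induced subgraph G' of G which is C_4-free has average degree d(G') < k. -/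
open SimpleGraph

open Finset Real

/-!
We take for `G` the random graph `G(n, p)`, modelled as the `p`-random subset of the edges of
`Kₙ`, and show that each of three bad events has small probability.

* A union bound over pairs of disjoint `s`-sets: `G ⊇ K_{s,s}` with probability at most
  `(n² p^s)^s ≤ 1/4`.
* The Chernoff bound with parameter `log 2`: `e(G) ≤ p·C(n,2)/2` with probability at most
  `exp (-(1 - log 2) p C(n,2) / 2) < 0.71`.
* If `G[S]` is `C₄`-free of average degree `d ≥ k`, then counting paths of length two gives
  `d (d - 1) ≤ |S| - 1`, so `|S| ≥ k² - k + 1` and `e(G[S]) ≤ C(|S|,2) / (k - 1)`. The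
  hypotheses force `p ≥ e / (k - 1)`, and then the relative-entropy form of the Chernoff bound
  bounds this lower-tail event for a fixed `S` by `(1 - p⁴)^(Q |S|)`, `Q = (k² - 3k - 2) / 4`.
  Summing over `S` gives at most `2⁻¹²`.
-/

noncomputable def bernoulliKL (x p : ℝ) : ℝ :=
  x * log (x / p) + (1 - x) * log ((1 - x) / (1 - p))

lemma two_div_three_mul_le_log_one_add {y : ℝ} (hy0 : 0 ≤ y) (hy1 : y ≤ 1) :
    2 / 3 * y ≤ log (1 + y) := by
  refine le_trans ?_ (le_log_one_add_of_nonneg hy0)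
  rw [le_div_iff₀ (by linarith)]
  nlinarith

lemma neg_log_one_sub_pow_four_le_two_mul_bernoulliKL {x p : ℝ} (hx : 0 < x)
    (hxp : exp 1 * x ≤ p) (hp1 : p < 1) : -log (1 - p ^ 4) ≤ 2 * bernoulliKL x p := by
  have he : 2.7182 < exp 1 := lt_trans (by norm_num) exp_one_gt_d9
  have hp0 : 0 < p := lt_of_lt_of_le (by positivity) hxp
  have hx1 : x < 1 := by nlinarith
  -- `log y ≤ y / e` at `y = p / x`
  have hA : x * log (p / x) ≤ p / exp 1 := by
    have := log_le_sub_one_of_pos (x := p / x / exp 1) (by positivity)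
    rw [log_div (by positivity) (exp_pos 1).ne', log_exp] at this
    have := mul_le_mul_of_nonneg_left this hx.le
    field_simp at this ⊢
    linarith
  have hB : -x ≤ (1 - x) * log (1 - x) := by
    have h1x : (1 - x) * (1 - (1 - x)⁻¹) = -x := by
      field_simp [(by linarith : (1:ℝ) - x ≠ 0)]
      ring
    rw [← h1x]
    exact mul_le_mul_of_nonneg_left (one_sub_inv_le_log_of_pos (by linarith)) (by linarith)
  have hC : log (1 - p) ≤ -p := by linarith [log_le_sub_one_of_pos (x := 1 - p) (by linarith)]
  have hD : 2 / 3 * (p + p ^ 2) ≤ log (1 + p) + log (1 + p ^ 2) := by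
    linarith [two_div_three_mul_le_log_one_add hp0.le hp1.le,
      two_div_three_mul_le_log_one_add (sq_nonneg p) (by nlinarith)]
  have hsplit : log (1 - p ^ 4) = log (1 - p) + (log (1 + p) + log (1 + p ^ 2)) := by
    rw [← log_mul (by positivity) (by positivity), ← log_mul (by linarith) (by positivity)]
    ring_nf
  have hKL : bernoulliKL x p =
      -(x * log (p / x)) + (1 - x) * log (1 - x) - (1 - x) * log (1 - p) := by
    rw [bernoulliKL, log_div hx.ne' hp0.ne', log_div hp0.ne' hx.ne',
      log_div (by linarith) (by linarith)]
    ring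
  have hxe : x ≤ p / exp 1 := by rw [le_div_iff₀ (exp_pos 1)]; linarith
  have hpe : p / exp 1 ≤ 0.3679 * p := by
    rw [div_le_iff₀ (exp_pos 1)]; nlinarith
  rw [hKL, hsplit]
  nlinarith [mul_le_mul_of_nonneg_left hC (by linarith : (0 : ℝ) ≤ 1 / 2 - x)]

section BernoulliSubset

variable {α : Type*} {U B F : Finset α} {p : ℝ}

noncomputable def bernoulliWeight (U : Finset α) (p : ℝ) (E : Finset α) : ℝ :=
  p ^ #E * (1 - p) ^ (#U - #E)

open Classical in
noncomputable def bernoulliProb (U : Finset α) (p : ℝ) (P : Finset α → Prop) : ℝ :=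
  ∑ E ∈ U.powerset with P E, bernoulliWeight U p E

lemma bernoulliWeight_nonneg (hp0 : 0 ≤ p) (hp1 : p ≤ 1) (E : Finset α) :
    0 ≤ bernoulliWeight U p E := by
  have := sub_nonneg.2 hp1
  unfold bernoulliWeight
  positivity

lemma sum_bernoulliWeight_mul_prod [DecidableEq α] (f : α → ℝ) :
    ∑ E ∈ U.powerset, bernoulliWeight U p E * ∏ i ∈ E, f i =
      ∏ i ∈ U, (p * f i + (1 - p)) := by
  rw [prod_add]
  refine sum_congr rfl fun E hE => ?_
  rw [bernoulliWeight, prod_mul_distrib, prod_const, prod_const,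
    card_sdiff_of_subset (mem_powerset.1 hE)]
  ring

lemma sum_bernoulliWeight : ∑ E ∈ U.powerset, bernoulliWeight U p E = 1 := by
  classical
  simpa using sum_bernoulliWeight_mul_prod (U := U) (p := p) fun _ => 1

lemma sum_bernoulliWeight_mul_pow_card_inter [DecidableEq α] (hB : B ⊆ U) (t : ℝ) :
    ∑ E ∈ U.powerset, bernoulliWeight U p E * t ^ #(E ∩ B) = (p * t + (1 - p)) ^ #B := by
  have h := sum_bernoulliWeight_mul_prod (U := U) (p := p) fun i => if i ∈ B then t else 1
  simp only [mul_ite, mul_one, ite_add, add_sub_cancel, prod_ite_mem, prod_const,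
    inter_eq_right.2 hB] at h
  exact h

lemma bernoulliProb_superset (hF : F ⊆ U) : bernoulliProb U p (F ⊆ ·) = p ^ #F := by
  classical
  have hinj : Set.InjOn (F ∪ ·) (U \ F).powerset := fun A hA B hB hAB => by
    simp only [coe_powerset, Set.mem_preimage, Set.mem_powerset_iff, coe_sdiff,
      Set.subset_sdiff, disjoint_coe] at hA hB hAB
    rw [← union_sdiff_cancel_left hA.2.symm, ← union_sdiff_cancel_left hB.2.symm, hAB]
  rw [bernoulliProb]
  convert_to ∑ E ∈ Icc F U, bernoulliWeight U p E = p ^ #F using 2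
  · ext; simp [and_comm]
  rw [Icc_eq_image_powerset hF, sum_image hinj, ← mul_one (p ^ #F),
    ← sum_bernoulliWeight (U := U \ F) (p := p), mul_sum]
  refine sum_congr rfl fun A hA => ?_
  have hA := subset_sdiff.1 (mem_powerset.1 hA)
  rw [bernoulliWeight, bernoulliWeight, card_union_of_disjoint hA.2.symm,
    card_sdiff_of_subset hF, pow_add, Nat.sub_sub]
  ring

lemma bernoulliProb_mono (hp0 : 0 ≤ p) (hp1 : p ≤ 1) {P Q : Finset α → Prop}
    (h : ∀ E ⊆ U, P E → Q E) : bernoulliProb U p P ≤ bernoulliProb U p Q := by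
  classical
  refine sum_le_sum_of_subset_of_nonneg (fun E hE => ?_)
    fun E _ _ => bernoulliWeight_nonneg hp0 hp1 E
  rw [mem_filter, mem_powerset] at hE ⊢
  exact ⟨hE.1, h E hE.1 hE.2⟩

lemma bernoulliProb_or_le (hp0 : 0 ≤ p) (hp1 : p ≤ 1) (P Q : Finset α → Prop) :
    bernoulliProb U p (fun E => P E ∨ Q E) ≤ bernoulliProb U p P + bernoulliProb U p Q := by
  simp only [bernoulliProb, sum_filter, ← sum_add_distrib]
  refine sum_le_sum fun E _ => ?_
  have := bernoulliWeight_nonneg (U := U) hp0 hp1 E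
  split_ifs <;> simp_all

lemma bernoulliProb_exists_le (hp0 : 0 ≤ p) (hp1 : p ≤ 1) {ι : Type*} (I : Finset ι)
    (P : ι → Finset α → Prop) :
    bernoulliProb U p (fun E => ∃ i ∈ I, P i E) ≤ ∑ i ∈ I, bernoulliProb U p (P i) := by
  classical
  simp only [bernoulliProb, sum_filter]
  rw [sum_comm]
  refine sum_le_sum fun E _ => ?_
  have hw := bernoulliWeight_nonneg (U := U) hp0 hp1 E
  have hterm : ∀ i ∈ I, 0 ≤ if P i E then bernoulliWeight U p E else 0 := fun i _ => by
    split_ifs <;> simp [hw]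
  split_ifs with h
  · obtain ⟨i, hi, hPi⟩ := h
    exact (if_pos hPi).symm.le.trans (single_le_sum hterm hi)
  · exact sum_nonneg hterm

lemma exists_not_of_bernoulliProb_lt_one {P : Finset α → Prop} (h : bernoulliProb U p P < 1) :
    ∃ E ⊆ U, ¬ P E := by
  by_contra! hP
  simp only [bernoulliProb, sum_filter] at h
  rw [sum_congr rfl fun E hE => if_pos (hP E (mem_powerset.1 hE)), sum_bernoulliWeight] at h
  exact lt_irrefl 1 h

lemma bernoulliProb_le_sum_mul (hp0 : 0 ≤ p) (hp1 : p ≤ 1) {P : Finset α → Prop}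
    {f : Finset α → ℝ} (hf0 : ∀ E ⊆ U, 0 ≤ f E) (hf : ∀ E ⊆ U, P E → 1 ≤ f E) :
    bernoulliProb U p P ≤ ∑ E ∈ U.powerset, bernoulliWeight U p E * f E := by
  classical
  calc bernoulliProb U p P
      ≤ ∑ E ∈ U.powerset with P E, bernoulliWeight U p E * f E := by
        refine sum_le_sum fun E hE => ?_
        rw [mem_filter, mem_powerset] at hE
        exact le_mul_of_one_le_right (bernoulliWeight_nonneg hp0 hp1 E) (hf E hE.1 hE.2)
    _ ≤ _ := sum_le_sum_of_subset_of_nonneg (filter_subset _ _) fun E hE _ =>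
        mul_nonneg (bernoulliWeight_nonneg hp0 hp1 E) (hf0 E (mem_powerset.1 hE))

lemma bernoulliProb_card_inter_le_le [DecidableEq α] (hB : B ⊆ U) (hp0 : 0 ≤ p) (hp1 : p ≤ 1)
    {l : ℝ} (hl : 0 ≤ l) (a : ℝ) :
    bernoulliProb U p (fun E => (#(E ∩ B) : ℝ) ≤ a) ≤
      exp (l * a) * (p * exp (-l) + (1 - p)) ^ #B := by
  calc bernoulliProb U p (fun E => (#(E ∩ B) : ℝ) ≤ a)
      ≤ ∑ E ∈ U.powerset, bernoulliWeight U p E * (exp (l * a) * exp (-l) ^ #(E ∩ B)) := by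
        refine bernoulliProb_le_sum_mul hp0 hp1 (fun _ _ => by positivity) fun E _ hE => ?_
        rw [← exp_nat_mul, ← exp_add, one_le_exp_iff]
        nlinarith
    _ = exp (l * a) * (p * exp (-l) + (1 - p)) ^ #B := by
        simp_rw [mul_left_comm _ (exp (l * a))]
        rw [← mul_sum, sum_bernoulliWeight_mul_pow_card_inter hB]

lemma bernoulliProb_card_inter_le_mul_card_le [DecidableEq α] (hB : B ⊆ U) {x : ℝ}
    (hx : 0 < x) (hxp : x ≤ p) (hp1 : p < 1) :
    bernoulliProb U p (fun E => (#(E ∩ B) : ℝ) ≤ x * #B) ≤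
      exp (-(#B * bernoulliKL x p)) := by
  have hp0 : 0 < p := hx.trans_le hxp
  have hr : 0 < (1 - x) / (1 - p) := div_pos (by linarith) (by linarith)
  have ht : 0 < x / p := div_pos hx hp0
  -- the optimal tilt `l`, for which `p e^{-l} + 1 - p = (1 - p) / (1 - x)`
  have hl : 0 ≤ log ((1 - x) / (1 - p)) - log (x / p) := by
    rw [sub_nonneg]
    refine log_le_log ht ((div_le_one hp0).2 hxp |>.trans ((one_le_div (by linarith)).2 ?_))
    linarith
  have hmgf : p * exp (-(log ((1 - x) / (1 - p)) - log (x / p))) + (1 - p) =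
      exp (-log ((1 - x) / (1 - p))) := by
    have h1x : 1 - x ≠ 0 := by linarith
    have h1p : 1 - p ≠ 0 := by linarith
    rw [exp_neg, exp_neg, exp_sub, exp_log hr, exp_log ht]
    field_simp
    ring
  refine (bernoulliProb_card_inter_le_le hB hp0.le hp1.le hl _).trans_eq ?_
  rw [hmgf, ← exp_nat_mul, ← exp_add, bernoulliKL]
  congr 1
  ring

lemma bernoulliProb_card_inter_le_half_mul_card_le [DecidableEq α] (hB : B ⊆ U) (hp0 : 0 ≤ p)
    (hp1 : p ≤ 1) :
    bernoulliProb U p (fun E => (#(E ∩ B) : ℝ) ≤ p * #B / 2) ≤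
      exp (-((1 - log 2) * (p * #B / 2))) := by
  refine (bernoulliProb_card_inter_le_le hB hp0 hp1 (log_nonneg one_le_two) _).trans ?_
  calc exp (log 2 * (p * #B / 2)) * (p * exp (-log 2) + (1 - p)) ^ #B
      ≤ exp (log 2 * (p * #B / 2)) * exp (-(p / 2)) ^ #B := by
        gcongr
        rw [exp_neg, exp_log two_pos]
        linarith [add_one_le_exp (-(p / 2))]
    _ = exp (-((1 - log 2) * (p * #B / 2))) := by
        rw [← exp_nat_mul, ← exp_add]
        congr 1
        ring

lemma bernoulliProb_card_inter_le_mul_card_le_rpow_pow [DecidableEq α] (hB : B ⊆ U) {x Q : ℝ}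
    {m : ℕ} (hx : 0 < x) (hxp : exp 1 * x ≤ p) (hp1 : p < 1) (hm : 2 * Q * m ≤ #B) :
    bernoulliProb U p (fun E => (#(E ∩ B) : ℝ) ≤ x * #B) ≤ ((1 - p ^ 4) ^ Q) ^ m := by
  have hp0 : 0 < p := lt_of_lt_of_le (by positivity) hxp
  have hu : 0 < 1 - p ^ 4 := by nlinarith [pow_lt_one₀ hp0.le hp1 four_ne_zero]
  have hL : log (1 - p ^ 4) ≤ 0 := log_nonpos hu.le (by nlinarith [pow_nonneg hp0.le 4])
  have hKL := neg_log_one_sub_pow_four_le_two_mul_bernoulliKL hx hxp hp1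
  calc bernoulliProb U p (fun E => (#(E ∩ B) : ℝ) ≤ x * #B)
      ≤ exp (-(#B * bernoulliKL x p)) :=
        bernoulliProb_card_inter_le_mul_card_le hB hx
          (le_trans (le_mul_of_one_le_left hx.le (one_le_exp zero_le_one)) hxp) hp1
    _ ≤ exp (m * (log (1 - p ^ 4) * Q)) := by
        gcongr
        nlinarith [mul_le_mul_of_nonneg_left hKL (Nat.cast_nonneg (α := ℝ) #B)]
    _ = ((1 - p ^ 4) ^ Q) ^ m := by rw [rpow_def_of_pos hu, exp_nat_mul]

end BernoulliSubset

lemma sum_pow_card_filter_le_card_le {α : Type*} (s : Finset α) {q : ℝ} (hq : 0 ≤ q)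
    (hsq : #s * q < 1) (m : ℕ) :
    ∑ t ∈ s.powerset with m ≤ #t, q ^ #t ≤ (#s * q) ^ m / (1 - #s * q) := by
  rw [sum_filter, sum_powerset_apply_card (fun j => if m ≤ j then q ^ j else 0)]
  calc ∑ j ∈ range (#s + 1), (#s).choose j • (if m ≤ j then q ^ j else 0)
      ≤ ∑ j ∈ range (#s + 1) with m ≤ j, (#s * q) ^ j := by
        rw [sum_filter]
        refine sum_le_sum fun j _ => ?_
        split_ifs
        · rw [nsmul_eq_mul, mul_pow]
          gcongr
          exact_mod_cast Nat.choose_le_pow _ _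
        · simp
    _ = ∑ j ∈ Ico m (#s + 1), (#s * q) ^ j := by
        congr 1
        ext j
        simp only [mem_filter, mem_range, mem_Ico]
        omega
    _ ≤ (#s * q) ^ m / (1 - #s * q) := geom_sum_Ico_le_of_lt_one (by positivity) hsq

lemma nonempty_of_pos_avgDeg {V : Type*} {H : SimpleGraph V} (h : 0 < avgDeg H) :
    Nonempty V := by
  by_contra hV
  rw [not_nonempty_iff] at hV
  simp [avgDeg] at h

namespace C4Free

variable {V : Type*} [Fintype V] {H : SimpleGraph V}

-- a path `a - v - b` is determined by its ends, or `v` and another middle vertex span a `C₄`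
lemma sum_degree_mul_degree_sub_one_le [DecidableRel H.Adj] (hH : C4Free H) :
    ∑ v, (H.degree v : ℝ) * (H.degree v - 1) ≤ Fintype.card V * (Fintype.card V - 1) := by
  classical
  have hcount :
      #(univ.sigma fun v => (H.neighborFinset v).offDiag) ≤ #(univ : Finset V).offDiag := by
    refine card_le_card_of_injOn Sigma.snd (fun x hx => ?_) fun x hx y hy hxy => ?_
    · simp only [coe_sigma, Set.mem_sigma_iff, coe_offDiag, Set.mem_offDiag] at hx
      simpa using hx.2.2.2
    · obtain ⟨a, c, d⟩ := x
      obtain ⟨b, c', d'⟩ := y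
      obtain ⟨rfl, rfl⟩ := Prod.mk.inj hxy
      simp only [coe_sigma, Set.mem_sigma_iff, coe_offDiag, Set.mem_offDiag, mem_coe,
        mem_neighborFinset] at hx hy
      by_contra hne
      exact hH ⟨a, b, c, d, fun h => hne (h ▸ rfl), hx.2.2.2, hx.2.1, hy.2.1, hx.2.2.1,
        hy.2.2.1⟩
  have hcard : ∀ s : Finset V, ((#s.offDiag : ℕ) : ℝ) = #s * (#s - 1) := fun s => by
    rw [offDiag_card, Nat.cast_sub (Nat.le_mul_self _)]
    push_cast
    ring
  have := (Nat.cast_le (α := ℝ)).2 hcount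
  simpa only [card_sigma, Nat.cast_sum, hcard, card_univ, card_neighborFinset_eq_degree]
    using this

lemma avgDeg_mul_avgDeg_sub_one_le [Nonempty V] (hH : C4Free H) :
    avgDeg H * (avgDeg H - 1) ≤ Fintype.card V - 1 := by
  classical
  have hm : (0 : ℝ) < Fintype.card V := by exact_mod_cast Fintype.card_pos
  have hsum : ∑ v, (H.degree v : ℝ) = Fintype.card V * avgDeg H := by
    rw [avgDeg, Nat.card_eq_fintype_card, ← coe_edgeFinset, Set.ncard_coe_finset,
      mul_div_cancel₀ _ hm.ne']
    exact_mod_cast sum_degrees_eq_twice_card_edges H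
  have hcs := sq_sum_le_card_mul_sum_sq (s := univ) (f := fun v => (H.degree v : ℝ))
  have hsq : ∑ v, (H.degree v : ℝ) ^ 2 =
      ∑ v, (H.degree v : ℝ) * (H.degree v - 1) + ∑ v, (H.degree v : ℝ) := by
    rw [← sum_add_distrib]
    exact sum_congr rfl fun v _ => by ring
  rw [card_univ, hsq, hsum] at hcs
  have hS := mul_le_mul_of_nonneg_left hH.sum_degree_mul_degree_sub_one_le hm.le
  have : Fintype.card V ^ 2 * (avgDeg H * (avgDeg H - 1) - (Fintype.card V - 1)) ≤ 0 := by
    nlinarith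
  nlinarith [(mul_nonpos_iff_pos_imp_nonpos.1 this).1 (by positivity)]

lemma mul_sub_one_add_one_le_card (hH : C4Free H) {k : ℝ} (hk : 1 ≤ k) (hkd : k ≤ avgDeg H) :
    k * (k - 1) + 1 ≤ Fintype.card V := by
  have := nonempty_of_pos_avgDeg (H := H) (by linarith)
  nlinarith [hH.avgDeg_mul_avgDeg_sub_one_le]

lemma sub_one_mul_ncard_edgeSet_le (hH : C4Free H) {k : ℝ} (hk : 1 ≤ k) (hkd : k ≤ avgDeg H) :
    (k - 1) * H.edgeSet.ncard ≤ Fintype.card V * (Fintype.card V - 1) / 2 := by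
  have := nonempty_of_pos_avgDeg (H := H) (by linarith)
  have hm : (0 : ℝ) < Fintype.card V := by exact_mod_cast Fintype.card_pos
  have he : (H.edgeSet.ncard : ℝ) = avgDeg H * Fintype.card V / 2 := by
    rw [avgDeg, Nat.card_eq_fintype_card]
    field_simp
  rw [he]
  nlinarith [hH.avgDeg_mul_avgDeg_sub_one_le, mul_le_mul_of_nonneg_right hkd hm.le]

end C4Free

section EdgeSets

variable {V : Type*}

lemma edgeSet_fromEdgeSet_of_subset {E : Set (Sym2 V)} (hE : E ⊆ (⊤ : SimpleGraph V).edgeSet) :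
    (fromEdgeSet E).edgeSet = E := by
  rw [edgeSet_fromEdgeSet, sdiff_eq_left, ← Set.subset_compl_iff_disjoint_right]
  rwa [← edgeSet_top]

lemma ncard_edgeSet_induce (G : SimpleGraph V) (S : Set V) :
    (G.induce S).edgeSet.ncard = (G.edgeSet ∩ {e | ∀ v ∈ e, v ∈ S}).ncard := by
  rw [← Set.ncard_image_of_injective _ (Sym2.map.injective Subtype.val_injective)]
  congr 1
  ext e
  induction e using Sym2.ind with
  | _ a b =>
    simp only [Set.mem_image, Set.mem_inter_iff, mem_edgeSet, Set.mem_ofPred_eq, Sym2.mem_iff]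
    constructor
    · rintro ⟨e', he', hee'⟩
      induction e' using Sym2.ind with
      | _ u v =>
        rw [Sym2.map_mk, Sym2.eq_iff] at hee'
        rcases hee' with ⟨rfl, rfl⟩ | ⟨rfl, rfl⟩
        · exact ⟨he', by rintro w (rfl | rfl) <;> simp⟩
        · exact ⟨he'.symm, by rintro w (rfl | rfl) <;> simp⟩
    · rintro ⟨hab, hS⟩
      exact ⟨s(⟨a, hS a (Or.inl rfl)⟩, ⟨b, hS b (Or.inr rfl)⟩), hab, rfl⟩

lemma card_image_mk_product [DecidableEq V] {S T : Finset V} (h : Disjoint S T) :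
    #((S ×ˢ T).image Sym2.mk.uncurry) = #S * #T := by
  rw [card_image_of_injOn, card_product]
  rintro ⟨a, b⟩ hab ⟨a', b'⟩ hab' heq
  simp only [coe_product, Set.mem_prod, mem_coe] at hab hab'
  rcases Sym2.eq_iff.1 heq with ⟨rfl, rfl⟩ | ⟨rfl, rfl⟩
  · rfl
  · exact (disjoint_left.1 h hab.1 hab'.2).elim

variable [Fintype V] [DecidableEq V]

lemma ncard_edgeSet_induce_fromEdgeSet {E : Finset (Sym2 V)}
    (hE : E ⊆ (⊤ : SimpleGraph V).edgeFinset) (S : Finset V) :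
    ((fromEdgeSet (E : Set (Sym2 V))).induce S).edgeSet.ncard = #(E ∩ S.sym2) := by
  rw [ncard_edgeSet_induce,
    edgeSet_fromEdgeSet_of_subset (by simpa only [coe_edgeFinset] using coe_subset.2 hE),
    ← Set.ncard_coe_finset]
  congr 1
  ext e
  simp only [Set.mem_inter_iff, mem_coe, Set.mem_ofPred_eq, coe_inter, Finset.mem_sym2_iff]

lemma card_edgeFinset_top_inter_sym2 (S : Finset V) :
    #((⊤ : SimpleGraph V).edgeFinset ∩ S.sym2) = (#S).choose 2 := by
  rw [← Sym2.card_image_offDiag]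
  congr 1
  ext e
  induction e using Sym2.ind with
  | _ a b =>
    simp only [edgeFinset_top, Set.toFinset_compl, mem_inter, mem_compl, Set.mem_toFinset,
      Sym2.mem_diagSet, Sym2.mk_isDiag_iff, mem_sym2_iff, Sym2.mem_iff, forall_eq_or_imp,
      forall_eq, mem_image, mem_offDiag, ne_eq, Prod.exists, Function.uncurry_apply_pair, Sym2.eq,
      Sym2.rel_iff', Prod.mk.injEq, Prod.swap_prod_mk]
    constructor
    · rintro ⟨hab, ha, hb⟩
      exact ⟨a, b, ⟨ha, hb, hab⟩, .inl ⟨rfl, rfl⟩⟩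
    · rintro ⟨x, y, ⟨hx, hy, hxy⟩, ⟨rfl, rfl⟩ | ⟨rfl, rfl⟩⟩
      exacts [⟨hxy, hx, hy⟩, ⟨Ne.symm hxy, hy, hx⟩]

lemma image_mk_product_subset_edgeFinset_top {S T : Finset V} (h : Disjoint S T) :
    (S ×ˢ T).image Sym2.mk.uncurry ⊆ (⊤ : SimpleGraph V).edgeFinset := by
  intro e he
  obtain ⟨⟨a, b⟩, hab, rfl⟩ := mem_image.1 he
  rw [mem_product] at hab
  simpa using fun hab' : a = b => disjoint_left.1 h hab.1 (hab' ▸ hab.2)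

end EdgeSets

section RandomGraph

variable {V : Type*} [Fintype V] [DecidableEq V] {p : ℝ}

variable (V) in
noncomputable def gnpProb (p : ℝ) (P : SimpleGraph V → Prop) : ℝ :=
  bernoulliProb (⊤ : SimpleGraph V).edgeFinset p fun E => P (fromEdgeSet E)

lemma gnpProb_mono (hp0 : 0 ≤ p) (hp1 : p ≤ 1) {P Q : SimpleGraph V → Prop}
    (h : ∀ G, P G → Q G) : gnpProb V p P ≤ gnpProb V p Q :=
  bernoulliProb_mono hp0 hp1 fun _ _ => h _

lemma exists_graph_of_gnpProb_add_lt_one {P Q R : SimpleGraph V → Prop} (hp0 : 0 ≤ p)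
    (hp1 : p ≤ 1)
    (h : gnpProb V p (¬ P ·) + gnpProb V p (¬ Q ·) + gnpProb V p (¬ R ·) < 1) :
    ∃ G, P G ∧ Q G ∧ R G := by
  unfold gnpProb at h
  obtain ⟨E, -, hE⟩ := exists_not_of_bernoulliProb_lt_one
    (U := (⊤ : SimpleGraph V).edgeFinset)
    (P := fun E : Finset (Sym2 V) => ¬ P (fromEdgeSet E) ∨ ¬ Q (fromEdgeSet E) ∨
      ¬ R (fromEdgeSet E)) <| h.trans_le' <| by
    grw [bernoulliProb_or_le hp0 hp1, bernoulliProb_or_le hp0 hp1, add_assoc]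
  simp only [not_or, not_not] at hE
  exact ⟨_, hE⟩

lemma gnpProb_not_kssFree_le (s : ℕ) (hp0 : 0 ≤ p) (hp1 : p ≤ 1) :
    gnpProb V p (¬ KssFree · s) ≤ ((Fintype.card V : ℝ) ^ 2 * p ^ s) ^ s := by
  let I := {ST ∈ powersetCard s (univ : Finset V) ×ˢ powersetCard s (univ : Finset V) |
    Disjoint ST.1 ST.2}
  have hI : ∀ ST ∈ I, #ST.1 = s ∧ #ST.2 = s ∧ Disjoint ST.1 ST.2 := fun ST hST => by
    simp only [I, mem_filter, mem_product, mem_powersetCard] at hST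
    exact ⟨hST.1.1.2, hST.1.2.2, hST.2⟩
  calc gnpProb V p (¬ KssFree · s)
      ≤ bernoulliProb (⊤ : SimpleGraph V).edgeFinset p
          (fun E => ∃ ST ∈ I, (ST.1 ×ˢ ST.2).image Sym2.mk.uncurry ⊆ E) := by
        refine bernoulliProb_mono hp0 hp1 fun E _ h => ?_
        obtain ⟨S, T, hST, hS, hT, hadj⟩ := not_not.1 h
        refine ⟨(S, T), by simp [I, hST, hS, hT], fun e he => ?_⟩
        obtain ⟨⟨a, b⟩, hab, rfl⟩ := mem_image.1 he
        rw [mem_product] at hab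
        exact ((fromEdgeSet_adj _).1 (hadj a hab.1 b hab.2)).1
    _ ≤ ∑ ST ∈ I, bernoulliProb (⊤ : SimpleGraph V).edgeFinset p
          ((ST.1 ×ˢ ST.2).image Sym2.mk.uncurry ⊆ ·) :=
        bernoulliProb_exists_le hp0 hp1 _ _
    _ = ∑ _ST ∈ I, p ^ (s * s) := sum_congr rfl fun ST hST => by
        obtain ⟨hS, hT, hST⟩ := hI ST hST
        rw [bernoulliProb_superset (image_mk_product_subset_edgeFinset_top hST),
          card_image_mk_product hST, hS, hT]
    _ ≤ ((Fintype.card V).choose s * (Fintype.card V).choose s : ℕ) * p ^ (s * s) := by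
        rw [sum_const, nsmul_eq_mul]
        gcongr
        exact (card_filter_le _ _).trans_eq (by simp [card_product])
    _ ≤ ((Fintype.card V : ℝ) ^ s * (Fintype.card V : ℝ) ^ s) * p ^ (s * s) := by
        have := Nat.choose_le_pow (Fintype.card V) s
        gcongr
        exact_mod_cast Nat.mul_le_mul this this
    _ = ((Fintype.card V : ℝ) ^ 2 * p ^ s) ^ s := by ring

lemma gnpProb_avgDeg_lt_le (hp0 : 0 ≤ p) (hp1 : p ≤ 1) :
    gnpProb V p (fun G => avgDeg G < (Fintype.card V - 1) * p / 2) ≤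
      exp (-((1 - log 2) * ((Fintype.card V : ℝ) * (Fintype.card V - 1) / 2 * p / 2))) := by
  have hU : #(⊤ : SimpleGraph V).edgeFinset = (Fintype.card V).choose 2 :=
    card_edgeFinset_top_eq_card_choose_two
  calc gnpProb V p (fun G => avgDeg G < (Fintype.card V - 1) * p / 2)
      ≤ bernoulliProb (⊤ : SimpleGraph V).edgeFinset p
          (fun E => (#(E ∩ (⊤ : SimpleGraph V).edgeFinset) : ℝ) ≤
            p * #(⊤ : SimpleGraph V).edgeFinset / 2) := by
        refine bernoulliProb_mono hp0 hp1 fun E hE h => ?_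
        dsimp only at h
        rw [inter_eq_left.2 hE, hU, Nat.cast_choose_two]
        rw [avgDeg, edgeSet_fromEdgeSet_of_subset
          (by simpa only [coe_edgeFinset] using coe_subset.2 hE),
          Set.ncard_coe_finset, Nat.card_eq_fintype_card] at h
        rcases (Nat.cast_nonneg (α := ℝ) (Fintype.card V)).eq_or_lt with hV | hV
        · rw [← hV, div_zero] at h; linarith
        · rw [div_lt_iff₀ hV] at h; nlinarith
    _ ≤ exp (-((1 - log 2) * (p * #(⊤ : SimpleGraph V).edgeFinset / 2))) :=
        bernoulliProb_card_inter_le_half_mul_card_le le_rfl hp0 hp1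
    _ = _ := by rw [hU, Nat.cast_choose_two, mul_comm p]

lemma gnpProb_exists_c4Free_le_avgDeg_le {k : ℕ} (hk : 2 ≤ k) (hpk : exp 1 / (k - 1) ≤ p)
    (hp1 : p < 1)
    (hq : Fintype.card V * (1 - p ^ 4) ^ (((k : ℝ) ^ 2 - 3 * k - 2) / 4) ≤ 1 / 2) :
    gnpProb V p (fun G => ∃ S : Finset V,
        C4Free (G.induce (S : Set V)) ∧ (k : ℝ) ≤ avgDeg (G.induce (S : Set V))) ≤
      (1 / 2) ^ (k * k - k) := by
  have hk1 : (1 : ℝ) < k := by exact_mod_cast hk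
  have hp0 : 0 < p := lt_of_lt_of_le (by have := sub_pos.2 hk1; positivity) hpk
  have hm₀ : ((k * k - k + 1 : ℕ) : ℝ) = k * (k - 1) + 1 := by
    push_cast [Nat.cast_sub (Nat.le_mul_self k)]
    ring
  let I := {S ∈ (univ : Finset V).powerset | k * k - k + 1 ≤ #S}
  let B : Finset V → Finset (Sym2 V) := fun S => (⊤ : SimpleGraph V).edgeFinset ∩ S.sym2
  have hB : ∀ S, (#(B S) : ℝ) = #S * (#S - 1) / 2 := fun S => by
    rw [card_edgeFinset_top_inter_sym2, Nat.cast_choose_two]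
  have hq0 : 0 ≤ (1 - p ^ 4) ^ (((k : ℝ) ^ 2 - 3 * k - 2) / 4) := rpow_nonneg (by
    nlinarith [pow_le_one₀ hp0.le hp1.le (n := 4)]) _
  calc gnpProb V p _
      ≤ bernoulliProb (⊤ : SimpleGraph V).edgeFinset p
          (fun E => ∃ S ∈ I, (#(E ∩ B S) : ℝ) ≤ 1 / (k - 1) * #(B S)) := by
        refine bernoulliProb_mono hp0.le hp1.le fun E hE ⟨S, hC4, hdeg⟩ => ⟨S, ?_, ?_⟩
        · have := hC4.mul_sub_one_add_one_le_card hk1.le hdeg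
          simp only [coe_sort_coe, Fintype.card_coe] at this
          rw [← hm₀] at this
          exact mem_filter.2 ⟨mem_powerset.2 (subset_univ S), by exact_mod_cast this⟩
        · have := hC4.sub_one_mul_ncard_edgeSet_le hk1.le hdeg
          simp only [ncard_edgeSet_induce_fromEdgeSet hE, coe_sort_coe, Fintype.card_coe] at this
          rw [← inter_assoc, inter_eq_left.2 hE, hB, one_div_mul_eq_div,
            le_div_iff₀ (by linarith)]
          linarith
    _ ≤ ∑ S ∈ I, bernoulliProb (⊤ : SimpleGraph V).edgeFinset p
          (fun E => (#(E ∩ B S) : ℝ) ≤ 1 / (k - 1) * #(B S)) :=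
        bernoulliProb_exists_le hp0.le hp1.le _ _
    _ ≤ ∑ S ∈ I, ((1 - p ^ 4) ^ (((k : ℝ) ^ 2 - 3 * k - 2) / 4)) ^ #S := by
        refine sum_le_sum fun S hS => bernoulliProb_card_inter_le_mul_card_le_rpow_pow
          inter_subset_left (by have := sub_pos.2 hk1; positivity) (by rwa [mul_one_div]) hp1 ?_
        have hS : (k : ℝ) * (k - 1) + 1 ≤ #S := by
          rw [← hm₀]
          exact_mod_cast (mem_filter.1 hS).2
        rw [hB]
        nlinarith
    _ ≤ (Fintype.card V * (1 - p ^ 4) ^ (((k : ℝ) ^ 2 - 3 * k - 2) / 4)) ^ (k * k - k + 1) /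
          (1 - Fintype.card V * (1 - p ^ 4) ^ (((k : ℝ) ^ 2 - 3 * k - 2) / 4)) := by
        have := sum_pow_card_filter_le_card_le (univ : Finset V) hq0
          (by rw [card_univ]; linarith) (k * k - k + 1)
        rwa [card_univ] at this
    _ ≤ (1 / 2) ^ (k * k - k + 1) / (1 / 2) := by
        gcongr
        linarith
    _ = (1 / 2) ^ (k * k - k) := by rw [pow_succ, mul_div_cancel_right₀ _ one_half_pos.ne']

end RandomGraph

lemma exp_one_div_sub_one_le {k p : ℝ} (hk : 4 ≤ k) (hp0 : 0 ≤ p) (hp1 : p < 1)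
    (h : (1 - p ^ 4) ^ ((k ^ 2 - 3 * k - 2) / 4) ≤ 1 / 4) : exp 1 / (k - 1) ≤ p := by
  set Q := (k ^ 2 - 3 * k - 2) / 4 with hQ_def
  have hQ : 1 / 2 ≤ Q := by nlinarith
  have hu : 0 < 1 - p ^ 4 := by nlinarith [pow_lt_one₀ hp0 hp1 four_ne_zero]
  have hc : 1.3862 < log 4 ∧ log 4 < 1.3863 := by
    rw [show (4 : ℝ) = 2 ^ 2 by norm_num, log_pow]
    constructor <;> linarith [log_two_gt_d9, log_two_lt_d9]
  have hlog : Q * log (1 - p ^ 4) ≤ -log 4 := by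
    rw [← log_rpow hu, ← log_inv, show (4 : ℝ)⁻¹ = 1 / 4 by norm_num]
    exact log_le_log (by positivity) h
  have hinv : 1 - (1 - p ^ 4)⁻¹ ≤ log (1 - p ^ 4) := one_sub_inv_le_log_of_pos hu
  have hp4 : log 4 ≤ p ^ 4 * (Q + log 4) := by
    have e : 1 - (1 - p ^ 4)⁻¹ = -(p ^ 4 / (1 - p ^ 4)) := by field_simp; ring
    rw [e] at hinv
    have : log 4 ≤ Q * (p ^ 4 / (1 - p ^ 4)) := by nlinarith
    rw [mul_div_assoc', le_div_iff₀ hu] at this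
    nlinarith
  have he : exp 1 ^ 4 < 54.6 := by
    have := pow_lt_pow_left₀ exp_one_lt_d9 (exp_pos 1).le four_ne_zero
    exact this.trans (by norm_num)
  have hpoly : exp 1 ^ 4 * (Q + log 4) ≤ log 4 * (k - 1) ^ 4 := by
    have hk81 : 81 ≤ (k - 1) ^ 4 := by
      have : (3:ℝ) ^ 4 ≤ (k - 1) ^ 4 := pow_le_pow_left₀ (by norm_num) (by linarith) 4
      linarith
    have hQk : 54.6 * Q ≤ 1.3862 * ((k - 1) ^ 4 - 54.6) := by
      have hk' : 0 ≤ k - 4 := by linarith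
      nlinarith [mul_nonneg hk' hk', mul_nonneg (mul_nonneg hk' hk') hk',
        mul_nonneg (mul_nonneg (mul_nonneg hk' hk') hk') hk']
    nlinarith [mul_le_mul_of_nonneg_right he.le (by linarith : 0 ≤ Q + log 4),
      mul_le_mul_of_nonneg_right hc.1.le (by linarith : 0 ≤ (k - 1) ^ 4 - 54.6)]
  have hk1 : 0 < k - 1 := by linarith
  refine (pow_le_pow_iff_left₀ (by positivity) hp0 four_ne_zero).1 ?_
  rw [div_pow, div_le_iff₀ (by positivity)]
  nlinarith [mul_le_mul_of_nonneg_right hp4 (by positivity : 0 ≤ (k - 1) ^ 4)]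

lemma two_le_and_pos_of_exp_le_half {n : ℕ} {p : ℝ}
    (h : exp (-((n : ℝ) * (n - 1) / 2) * p / 4) ≤ 1 / 2) : 2 ≤ n ∧ 0 < p := by
  have hpos : 0 < (n : ℝ) * (n - 1) / 2 * p := by
    by_contra! hle
    have : 1 ≤ exp (-((n : ℝ) * (n - 1) / 2) * p / 4) := one_le_exp (by linarith)
    linarith
  have hn : 2 ≤ n := by
    by_contra! hn
    interval_cases n <;> simp at hpos
  have : (0 : ℝ) < n * (n - 1) / 2 := by
    have : (2 : ℝ) ≤ n := by exact_mod_cast hn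
    nlinarith
  exact ⟨hn, pos_of_mul_pos_right hpos this.le⟩

lemma four_le_of_rpow_lt_one {k : ℕ} {u : ℝ} (hu0 : 0 < u) (hu1 : u ≤ 1)
    (h : u ^ (((k : ℝ) ^ 2 - 3 * k - 2) / 4) < 1) : 4 ≤ k := by
  by_contra! hk
  have hk3 : (k : ℝ) ≤ 3 := by exact_mod_cast Nat.le_of_lt_succ hk
  have := one_le_rpow_of_pos_of_le_one_of_nonpos hu0 hu1
    (by nlinarith [(Nat.cast_nonneg k : (0 : ℝ) ≤ k)] : ((k : ℝ) ^ 2 - 3 * k - 2) / 4 ≤ 0)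
  linarith

lemma exp_neg_one_sub_log_two_mul_le {a : ℝ} (h : exp (-a / 4) ≤ 1 / 2) :
    exp (-((1 - log 2) * (a / 2))) ≤ 0.71 := by
  have ha : log 2 ≤ a / 4 := by
    have := log_le_log (exp_pos _) h
    rw [log_exp, one_div, log_inv] at this
    linarith
  have hl := log_two_lt_d9
  have hl' := log_two_gt_d9
  -- `(1 - log 2) a / 2 ≥ 2 log 2 (1 - log 2) > 0.425`
  calc exp (-((1 - log 2) * (a / 2))) ≤ exp (-0.425) := by
        gcongr
        nlinarith [mul_le_mul_of_nonneg_left ha (by linarith : (0 : ℝ) ≤ 1 - log 2)]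
    _ ≤ 0.71 := by
        rw [exp_neg, inv_le_comm₀ (exp_pos _) (by norm_num)]
        linarith [add_one_le_exp (0.425 : ℝ)]

theorem random_lower_bound_general (k s : ℕ) (hs : 2 ≤ s) (n : ℕ)
    (p : ℝ)
    (h1 : (n : ℝ) ^ 2 * p ^ s ≤ 1/2)
    (h2 : (n : ℝ) * (1 - p ^ 4) ^ (((k : ℝ) ^ 2 - 3 * k - 2) / 4) ≤ 1/2)
    (h3 : Real.exp (-((n : ℝ) * ((n : ℝ) - 1) / 2) * p / 4) ≤ 1/2) :
    ∃ G : SimpleGraph (Fin n),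
      ((n : ℝ) - 1) * p / 2 ≤ avgDeg G ∧ KssFree G s ∧
      ∀ S : Finset (Fin n), C4Free (G.induce (S : Set (Fin n))) →
        avgDeg (G.induce (S : Set (Fin n))) < k := by
  obtain ⟨hn, hp0⟩ := two_le_and_pos_of_exp_le_half h3
  have hn' : (2 : ℝ) ≤ n := by exact_mod_cast hn
  have hp1 : p < 1 := by
    by_contra! hp
    nlinarith [one_le_pow₀ hp (n := s)]
  have hu : 0 < 1 - p ^ 4 := by nlinarith [pow_lt_one₀ hp0.le hp1 four_ne_zero]
  have hq : (1 - p ^ 4) ^ (((k : ℝ) ^ 2 - 3 * k - 2) / 4) ≤ 1 / 4 := by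
    nlinarith [rpow_nonneg hu.le (((k : ℝ) ^ 2 - 3 * k - 2) / 4)]
  have hk : 4 ≤ k := four_le_of_rpow_lt_one hu (by nlinarith [pow_nonneg hp0.le 4]) (by linarith)
  have hpk := exp_one_div_sub_one_le (by exact_mod_cast hk) hp0.le hp1 hq
  refine exists_graph_of_gnpProb_add_lt_one hp0.le hp1.le <| lt_of_le_of_lt
    (add_le_add_three ?_ ?_ ?_) (by norm_num : (0.71 + 1 / 4 + (1 / 2) ^ 12 : ℝ) < 1)
  · refine le_trans (gnpProb_mono hp0.le hp1.le fun G h => ?_)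
      ((gnpProb_avgDeg_lt_le hp0.le hp1.le).trans (exp_neg_one_sub_log_two_mul_le ?_))
    · simpa using h
    · simpa [neg_div, neg_mul] using h3
  · refine (gnpProb_not_kssFree_le s hp0.le hp1.le).trans ?_
    calc ((Fintype.card (Fin n) : ℝ) ^ 2 * p ^ s) ^ s ≤ (1 / 2) ^ s :=
          pow_le_pow_left₀ (by positivity) (by simpa using h1) s
      _ ≤ (1 / 2) ^ 2 := pow_le_pow_of_le_one (by norm_num) (by norm_num) hs
      _ = 1 / 4 := by norm_num
  · refine le_trans (gnpProb_mono hp0.le hp1.le fun G h => ?_)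
      ((gnpProb_exists_c4Free_le_avgDeg_le (by omega) hpk hp1 (by simpa using h2)).trans ?_)
    · simpa using h
    · exact pow_le_pow_of_le_one (by norm_num) (by norm_num) (Nat.le_sub_of_add_le (by nlinarith))

/-- Theorem 6.4: if `n` and `p` satisfy the stated inequalities then there is an `n`-vertex
`K_{s,s}`-free graph of average degree at least `(n-1)p/2` in which every induced `C₄`-free
subgraph has average degree less than `k`. -/
theorem random_lower_bound (k s : ℕ) (hk : 2 ≤ k) (hs : 2 ≤ s) (n : ℕ) (hn : 0 < n)
    (p : ℝ) (hp0 : 0 ≤ p) (hp1 : p ≤ 1)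
    (h1 : (n : ℝ) ^ 2 * p ^ s ≤ 1/2)
    (h2 : (n : ℝ) * (1 - p ^ 4) ^ (((k : ℝ) ^ 2 - 3 * k - 2) / 4) ≤ 1/2)
    (h3 : Real.exp (-((n : ℝ) * ((n : ℝ) - 1) / 2) * p / 4) ≤ 1/2) :
    ∃ G : SimpleGraph (Fin n),
      ((n : ℝ) - 1) * p / 2 ≤ avgDeg G ∧ KssFree G s ∧
      ∀ S : Finset (Fin n), C4Free (G.induce (S : Set (Fin n))) →
        avgDeg (G.induce (S : Set (Fin n))) < k :=
  random_lower_bound_general k s hs n p h1 h2 h3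
end

section
/- There exists an integer k₀ such that for all integers k ≥ k₀ there exists a finite simple graph G which is K_{k,k}-free, has average degree d(G) ≥ k^{k/21}, and in which every induced subgraph G' that is C_4-free has average degree d(G') < k. (In other words, for sufficiently large k, f_Ind(k,k) ≥ k^{k/21}, where f_Ind(s,k) is the least D such that every K_{s,s}-free graph of average degree at least D contains an induced C_4-free subgraph of average degree at least k.) -/
/-!
Take a uniformly random labelling `f : Sym2 (Fin n) → Fin q` and join `u ≠ v` when
`f s(u, v) = 0`, i.e. the random graph `G(n, 1/q)` with `q ≈ k^(1/8)` and `n = q^(k/2 - 1)`.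
A fixed pair of disjoint `k`-sets spans a `K_{k,k}` with probability `q^(-k²)`, and there are
fewer than `n^(2k)` such pairs. Any `m ≈ k²` vertices, split into two families of `m/4` pairs, span
`m²/16` edge-disjoint potential `C₄`s (one per left pair and right pair), so they induce no `C₄`
with probability at most `(1 - q⁻⁴)^(m²/16)`; this beats the `n^m` choices of the vertices. Both
bad events have probability at most `1/(4q)`, so averaging the number of edges over the remaining
labellings yields a graph with at least `n(n-1)/(4q)` edges, i.e. average degree `≥ (n-1)/(2q)`,
which exceeds `k^(k/21)`. In it every induced `C₄`-free subgraph has fewer than `k(k-1)` vertices,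
and a `C₄`-free graph with average degree `d` has at least `d(d-1) + 1` vertices
(Kővári–Sós–Turán), so `d < k`.
-/

open SimpleGraph

open Finset Function

section Labellings

variable {ι α : Type*} [Fintype ι] [DecidableEq ι] [Fintype α]

lemma card_filter_and_mul_card {B : Finset ι} {P Q : (ι → α) → Prop}
    [DecidablePred P] [DecidablePred Q] (hP : DependsOn P B) (hQ : DependsOn Q (↑B)ᶜ) :
    #{f | P f ∧ Q f} * Fintype.card (ι → α) = #{f | P f} * #{f | Q f} := by
  rw [← card_univ, ← card_product, ← card_product]
  -- swapping the values on `B` maps `{P ∧ Q} × univ` bijectively onto `{P} × {Q}`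
  let σ (fg : (ι → α) × (ι → α)) := (B.piecewise fg.1 fg.2, B.piecewise fg.2 fg.1)
  refine card_nbij' σ σ ?_ ?_ ?_ ?_ <;> rintro ⟨f, g⟩ hfg
  iterate 2
    simp only [coe_product, coe_filter, Set.mem_prod, Set.mem_ofPred_eq, mem_coe, mem_univ,
      true_and, and_true] at hfg ⊢
    exact ⟨(hP fun c hc => (piecewise_eq_of_mem _ _ _ hc).symm).mp hfg.1,
      (hQ fun c hc => (piecewise_eq_of_notMem _ _ _ hc).symm).mp hfg.2⟩
  iterate 2 ext c <;> by_cases hc : c ∈ B <;> simp [σ, hc]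

lemma card_filter_forall_mul_pow {β : Type*} {B : β → Finset ι}
    {P : β → (ι → α) → Prop} [∀ t, DecidablePred (P t)] {F : Finset β}
    (hB : (F : Set β).PairwiseDisjoint B) (hP : ∀ t ∈ F, DependsOn (P t) (B t)) {m d : ℕ}
    (hc : ∀ t ∈ F, #{f | P t f} * d = m * Fintype.card (ι → α)) :
    #{f | ∀ t ∈ F, P t f} * d ^ #F = m ^ #F * Fintype.card (ι → α) := by
  classical
  induction F using Finset.induction_on with
  | empty => simp
  | @insert a F ha ih =>
    set N := Fintype.card (ι → α)
    rcases Nat.eq_zero_or_pos N with hN | hN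
    · have hempty (s : Finset (ι → α)) : #s = 0 := Nat.le_zero.mp ((card_le_univ s).trans_eq hN)
      simp [hN, hempty]
    have hR : DependsOn (fun f => ∀ t ∈ F, P t f) (↑(B a))ᶜ := fun f g hfg =>
      propext <| forall₂_congr fun t ht => Iff.of_eq <| hP t (mem_insert_of_mem ht) fun c hc =>
        hfg c <| disjoint_left.mp (hB (mem_insert_of_mem ht) (mem_insert_self a F)
          (ne_of_mem_of_not_mem ht ha)) hc
    have hsplit := card_filter_and_mul_card (hP a (mem_insert_self a F)) hR
    refine Nat.eq_of_mul_eq_mul_right hN ?_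
    simp only [forall_mem_insert, card_insert_of_notMem ha, pow_succ]
    calc #{f | P a f ∧ ∀ t ∈ F, P t f} * (d ^ #F * d) * N
        = #{f | P a f ∧ ∀ t ∈ F, P t f} * N * d ^ #F * d := by ring
      _ = #{f | P a f} * d * (#{f | ∀ t ∈ F, P t f} * d ^ #F) := by rw [hsplit]; ring
      _ = m * N * (m ^ #F * N) := by
        rw [hc a (mem_insert_self a F),
          ih (hB.subset (by simp)) (fun t ht => hP t (mem_insert_of_mem ht))
            (fun t ht => hc t (mem_insert_of_mem ht))]
      _ = m ^ #F * m * N * N := by ring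

variable [DecidableEq α]

lemma card_filter_forall_eq_mul_pow (J : Finset ι) (a : α) :
    #{f : ι → α | ∀ c ∈ J, f c = a} * Fintype.card α ^ #J = Fintype.card (ι → α) := by
  have hpi : ({f : ι → α | ∀ c ∈ J, f c = a} : Finset _) =
      Fintype.piFinset fun c => if c ∈ J then {a} else univ := by
    ext f
    simp only [mem_filter, mem_univ, true_and, Fintype.mem_piFinset]
    refine ⟨fun hf c => ?_, fun hf c hc => by simpa [hc] using hf c⟩
    split_ifs with hc <;> simp [hc, hf]
  rw [hpi, Fintype.card_piFinset, Fintype.card_fun]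
  simp only [apply_ite, card_singleton, card_univ, prod_ite]
  have hsplit := card_filter_add_card_filter_not (s := univ) (· ∈ J)
  simp only [filter_mem_eq_inter, univ_inter, card_univ] at hsplit
  simp [← pow_add, ← hsplit, add_comm]

lemma card_filter_exists_ne_mul_pow (J : Finset ι) (a : α) :
    #{f : ι → α | ∃ c ∈ J, f c ≠ a} * Fintype.card α ^ #J
      = (Fintype.card α ^ #J - 1) * Fintype.card (ι → α) := by
  have hcompl := card_filter_add_card_filter_not (s := univ)
    (fun f : ι → α => ∀ c ∈ J, f c = a)
  simp only [not_forall, exists_prop, card_univ] at hcompl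
  rw [Nat.eq_sub_of_add_eq' hcompl, Nat.sub_mul, card_filter_forall_eq_mul_pow, Nat.sub_one_mul,
    Nat.mul_comm]

lemma sum_card_filter_eq_mul_card (s : Finset ι) (a : α) :
    (∑ f : ι → α, #{c ∈ s | f c = a}) * Fintype.card α = #s * Fintype.card (ι → α) := by
  have hswap := sum_card_bipartiteAbove_eq_sum_card_bipartiteBelow
    (s := (univ : Finset (ι → α))) (t := s) (r := fun f c => f c = a)
  simp only [bipartiteAbove, bipartiteBelow] at hswap
  rw [hswap, sum_mul, ← smul_eq_mul, ← sum_const]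
  refine sum_congr rfl fun c _ => ?_
  simpa using card_filter_forall_eq_mul_pow {c} a

end Labellings

section Averaging

variable {Ω : Type*}

lemma card_mul_le_of_subset_biUnion {δ : Type*} [DecidableEq Ω] {s : Finset Ω} {D : Finset δ}
    {E : δ → Finset Ω} (hs : s ⊆ D.biUnion E) {a b : ℕ} (hE : ∀ d ∈ D, #(E d) * a ≤ b) :
    #s * a ≤ #D * b :=
  calc #s * a ≤ (∑ d ∈ D, #(E d)) * a := by gcongr; exact (card_le_card hs).trans card_biUnion_le
    _ = ∑ d ∈ D, #(E d) * a := sum_mul ..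
    _ ≤ #D * b := by simpa using sum_le_card_nsmul D _ b hE

lemma exists_notMem_le_mul_of_sum_mul_eq [Fintype Ω] [Nonempty Ω]
    {bad : Finset Ω} {X : Ω → ℕ} {M r : ℕ} (hM : 0 < M) (hX : ∀ ω, X ω ≤ M)
    (hsum : (∑ ω, X ω) * r = M * Fintype.card Ω) (hbad : #bad * (2 * r) ≤ Fintype.card Ω) :
    ∃ ω ∉ bad, M ≤ 2 * r * X ω := by
  classical
  set N := Fintype.card Ω
  have hN : 0 < N := Fintype.card_pos
  have hr : 0 < r := Nat.pos_of_ne_zero fun hr => by simp [hr] at hsum; omega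
  have hbadX : ∑ ω ∈ bad, X ω ≤ #bad * M := by simpa using sum_le_card_nsmul bad X M fun ω _ => hX ω
  have hsplit := sum_compl_add_sum bad X
  have hgood : #badᶜ * M ≤ ∑ ω ∈ badᶜ, 2 * r * X ω := by
    rw [← mul_sum]
    have : #badᶜ ≤ N := card_le_univ _
    nlinarith
  have hne : badᶜ.Nonempty := by
    have : #bad * 2 ≤ N := le_trans (Nat.mul_le_mul_left _ (by omega)) hbad
    rw [← card_pos, card_compl]
    omega
  obtain ⟨ω, hω, hle⟩ := exists_le_of_sum_le (f := fun _ => M) (g := fun ω => 2 * r * X ω) hne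
    (by rwa [sum_const, smul_eq_mul])
  exact ⟨ω, mem_compl.mp hω, hle⟩

end Averaging

section RandomGraph

variable {V α : Type*} [Fintype V] [Zero α]

/-- For `f` uniformly random and `Fintype.card α = q`, this is the binomial random graph
`G(|V|, 1/q)`: each pair is an edge independently, with probability `1/q`. -/
def labelGraph (f : Sym2 V → α) : SimpleGraph V := fromEdgeSet {e | f e = 0}

lemma ncard_edgeSet_labelGraph [DecidableEq V] [DecidableEq α] (f : Sym2 V → α) :
    (labelGraph f).edgeSet.ncard = #{e ∈ (⊤ : SimpleGraph V).edgeFinset | f e = 0} := by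
  rw [← Set.ncard_coe_finset]
  congr 1
  ext e
  simp [labelGraph, and_comm]

lemma ncard_edgeSet_labelGraph_le (f : Sym2 V → α) :
    (labelGraph f).edgeSet.ncard ≤ (Fintype.card V).choose 2 := by
  classical
  rw [ncard_edgeSet_labelGraph, ← card_edgeFinset_top_eq_card_choose_two]
  exact card_filter_le _ _

variable [DecidableEq V] [Fintype α]

lemma sum_ncard_edgeSet_labelGraph_mul :
    (∑ f : Sym2 V → α, (labelGraph f).edgeSet.ncard) * Fintype.card α
      = (Fintype.card V).choose 2 * Fintype.card (Sym2 V → α) := by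
  classical
  rw [← card_edgeFinset_top_eq_card_choose_two, ← sum_card_filter_eq_mul_card _ 0]
  simp only [ncard_edgeSet_labelGraph]

lemma card_mul_le_of_forall_not_kssFree {k : ℕ} {s : Finset (Sym2 V → α)}
    (hs : ∀ f ∈ s, ¬ KssFree (labelGraph f) k) : #s * Fintype.card α ^ (k * k)
      ≤ Fintype.card V ^ (2 * k) * Fintype.card (Sym2 V → α) := by
  classical
  let D := (powersetCard k (univ : Finset V) ×ˢ powersetCard k univ).filter
    fun ST => Disjoint ST.1 ST.2
  let J (ST : Finset V × Finset V) : Finset (Sym2 V) := (ST.1 ×ˢ ST.2).image Sym2.mk.uncurry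
  let E (ST : Finset V × Finset V) : Finset (Sym2 V → α) := {f | ∀ c ∈ J ST, f c = 0}
  have hcover : s ⊆ D.biUnion E := by
    intro f hf
    obtain ⟨S, T, hST, hS, hT, hadj⟩ := not_not.mp (hs f hf)
    simp only [mem_biUnion, mem_filter, mem_product, mem_powersetCard, subset_univ, true_and,
      mem_univ, mem_image, Prod.exists, forall_exists_index, and_imp, D, E, J]
    refine ⟨S, T, ⟨⟨hS, hT⟩, hST⟩, ?_⟩
    rintro _ a b ha hb rfl
    exact ((fromEdgeSet_adj _).mp (hadj a ha b hb)).1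
  refine (card_mul_le_of_subset_biUnion (b := Fintype.card (Sym2 V → α)) hcover
    fun ST hST => ?_).trans ?_
  · simp only [mem_filter, mem_product, mem_powersetCard, D] at hST
    obtain ⟨⟨⟨-, hS⟩, -, hT⟩, hST⟩ := hST
    have hinj : Set.InjOn Sym2.mk.uncurry (↑(ST.1 ×ˢ ST.2) : Set (V × V)) := by
      rintro ⟨a, b⟩ hab ⟨a', b'⟩ hab' h
      simp only [coe_product, Set.mem_prod, mem_coe] at hab hab'
      rcases Sym2.eq_iff.mp h with ⟨rfl, rfl⟩ | ⟨rfl, rfl⟩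
      · rfl
      · exact absurd hab'.2 (disjoint_left.mp hST hab.1)
    rw [← card_filter_forall_eq_mul_pow (J ST) 0, card_image_of_injOn hinj, card_product, hS, hT]
  · gcongr
    calc #D ≤ #(powersetCard k (univ : Finset V) ×ˢ powersetCard k univ) := card_filter_le _ _
      _ ≤ Fintype.card V ^ (2 * k) := by
        rw [card_product, card_powersetCard, card_univ, two_mul, pow_add]
        exact Nat.mul_le_mul (Nat.choose_le_pow _ _) (Nat.choose_le_pow _ _)

end RandomGraph

section CrossBlocks

variable {V κ : Type*} {g : Bool × κ × Bool → V}

lemma eq_of_mk_eq_mk_of_injective (hg : Injective g) {i j i' j' : κ} {x y x' y' : Bool}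
    (h : s(g (false, i, x), g (true, j, y)) = s(g (false, i', x'), g (true, j', y'))) :
    i = i' ∧ j = j' ∧ x = x' ∧ y = y' := by
  rcases Sym2.eq_iff.mp h with ⟨h₁, h₂⟩ | ⟨h₁, -⟩
  · simp_all [hg.eq_iff]
  · simpa using hg h₁

variable [DecidableEq V]

/-- Vertex `g (false, i, x)` is member `x` of the `i`-th left pair, and `g (true, j, y)` member `y`
of the `j`-th right pair; the block of `(i, j)` consists of the four pairs joining them. -/
def crossBlock (g : Bool × κ × Bool → V) (p : κ × κ) : Finset (Sym2 V) :=
  (univ : Finset (Bool × Bool)).image fun xy => s(g (false, p.1, xy.1), g (true, p.2, xy.2))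

lemma card_crossBlock (hg : Injective g) (p : κ × κ) : #(crossBlock g p) = 4 := by
  rw [crossBlock, card_image_of_injective]
  · rfl
  rintro ⟨x, y⟩ ⟨x', y'⟩ h
  obtain ⟨-, -, rfl, rfl⟩ := eq_of_mk_eq_mk_of_injective hg h
  rfl

lemma pairwiseDisjoint_crossBlock (hg : Injective g) (F : Finset (κ × κ)) :
    (F : Set (κ × κ)).PairwiseDisjoint (crossBlock g) := by
  rintro ⟨i, j⟩ - ⟨i', j'⟩ - hne
  refine disjoint_left.mpr fun c hc hc' => hne ?_
  simp only [crossBlock, mem_image, mem_univ, true_and, Prod.exists] at hc hc'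
  obtain ⟨x, y, rfl⟩ := hc
  obtain ⟨x', y', h⟩ := hc'
  obtain ⟨rfl, rfl, -⟩ := eq_of_mk_eq_mk_of_injective hg h.symm
  rfl

lemma not_c4Free_induce_of_crossBlock {α : Type*} [Zero α] {f : Sym2 V → α} (hg : Injective g)
    {S : Finset V} (hS : ∀ x, g x ∈ S) {p : κ × κ} (hf : ∀ c ∈ crossBlock g p, f c = 0) :
    ¬ C4Free ((labelGraph f).induce S) := by
  let v (x : Bool × κ × Bool) : (S : Set V) := ⟨g x, hS x⟩
  have hadj (x y : Bool) :
      ((labelGraph f).induce S).Adj (v (false, p.1, x)) (v (true, p.2, y)) := by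
    simp only [comap_adj, Embedding.subtype_apply, labelGraph, fromEdgeSet_adj,
      Set.mem_ofPred_eq, v]
    refine ⟨hf _ (mem_image.mpr ⟨(x, y), mem_univ _, rfl⟩), fun h => ?_⟩
    simpa using hg h
  refine fun h => h ⟨_, _, _, _, fun h => ?_, fun h => ?_, hadj false false, hadj true false,
    hadj false true, hadj true true⟩ <;> simpa [v] using hg (congrArg Subtype.val h)

variable [Fintype V] [Fintype κ] {α : Type*} [Fintype α] [Zero α]

lemma card_mul_le_of_forall_crossBlock_ne {s : Finset (Sym2 V → α)}
    (hs : ∀ f ∈ s, ∃ g : Bool × κ × Bool → V, Injective g ∧ ∀ p, ∃ c ∈ crossBlock g p, f c ≠ 0) :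
    #s * (Fintype.card α ^ 4) ^ (Fintype.card κ * Fintype.card κ)
      ≤ Fintype.card V ^ (4 * Fintype.card κ) *
        ((Fintype.card α ^ 4 - 1) ^ (Fintype.card κ * Fintype.card κ) *
          Fintype.card (Sym2 V → α)) := by
  classical
  let D : Finset (Bool × κ × Bool → V) := {g | Injective g}
  let E (g : Bool × κ × Bool → V) : Finset (Sym2 V → α) :=
    {f | ∀ p ∈ univ, ∃ c ∈ crossBlock g p, f c ≠ 0}
  have hcover : s ⊆ D.biUnion E := by
    intro f hf
    obtain ⟨g, hg, hfg⟩ := hs f hf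
    exact mem_biUnion.mpr ⟨g, by simpa [D] using hg, by simpa [E] using hfg⟩
  refine (card_mul_le_of_subset_biUnion (b := (Fintype.card α ^ 4 - 1) ^ (Fintype.card κ *
    Fintype.card κ) * Fintype.card (Sym2 V → α)) hcover fun g hg => le_of_eq ?_).trans ?_
  · have hdep (p : κ × κ) : DependsOn (fun f : Sym2 V → α => ∃ c ∈ crossBlock g p, f c ≠ 0)
        (crossBlock g p) := fun f f' h => by
      simp only [eq_iff_iff]
      exact ⟨fun ⟨c, hc, hfc⟩ => ⟨c, hc, by rwa [← h c hc]⟩,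
        fun ⟨c, hc, hfc⟩ => ⟨c, hc, by rwa [h c hc]⟩⟩
    have hg : Injective g := by simpa [D] using hg
    simpa [E, card_univ, Fintype.card_prod] using card_filter_forall_mul_pow
      (d := Fintype.card α ^ 4) (m := Fintype.card α ^ 4 - 1)
      (pairwiseDisjoint_crossBlock hg univ) (fun p _ => hdep p)
      (fun p _ => by rw [← card_crossBlock hg p, card_filter_exists_ne_mul_pow])
  · gcongr
    refine (card_le_univ D).trans_eq ?_
    simp only [Fintype.card_fun, Fintype.card_prod, Fintype.card_bool]
    ring

end CrossBlocks

section Construction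

variable {V α κ : Type*} [Fintype V] [Fintype α] [Zero α] [Fintype κ]

theorem exists_kssFree_le_card_edgeSet_c4Free_induce (k : ℕ) (hV : 2 ≤ Fintype.card V)
    (hK : 4 * Fintype.card α * Fintype.card V ^ (2 * k) ≤ Fintype.card α ^ (k * k))
    (hC : 4 * Fintype.card α * Fintype.card V ^ (4 * Fintype.card κ) *
        (Fintype.card α ^ 4 - 1) ^ (Fintype.card κ * Fintype.card κ)
      ≤ (Fintype.card α ^ 4) ^ (Fintype.card κ * Fintype.card κ)) :
    ∃ G : SimpleGraph V, KssFree G k ∧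
      (Fintype.card V).choose 2 ≤ 2 * Fintype.card α * G.edgeSet.ncard ∧
      ∀ S : Finset V, C4Free (G.induce (S : Set V)) → #S < 4 * Fintype.card κ := by
  classical
  set N := Fintype.card (Sym2 V → α)
  let bad₁ : Finset (Sym2 V → α) := {f | ¬ KssFree (labelGraph f) k}
  let bad₂ : Finset (Sym2 V → α) :=
    {f | ∃ g : Bool × κ × Bool → V, Injective g ∧ ∀ p, ∃ c ∈ crossBlock g p, f c ≠ 0}
  have h₁ : #bad₁ * (4 * Fintype.card α) ≤ N := by
    have := card_mul_le_of_forall_not_kssFree (k := k) (s := bad₁) (by simp [bad₁])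
    have : 0 < Fintype.card α ^ (k * k) := by positivity
    nlinarith
  have h₂ : #bad₂ * (4 * Fintype.card α) ≤ N := by
    have := card_mul_le_of_forall_crossBlock_ne (κ := κ) (s := bad₂) (by simp [bad₂])
    have : 0 < (Fintype.card α ^ 4) ^ (Fintype.card κ * Fintype.card κ) := by positivity
    nlinarith
  obtain ⟨f, hf, hdense⟩ := exists_notMem_le_mul_of_sum_mul_eq (bad := bad₁ ∪ bad₂)
    (X := fun f => (labelGraph f).edgeSet.ncard) (Nat.choose_pos hV) ncard_edgeSet_labelGraph_le
    sum_ncard_edgeSet_labelGraph_mul (by have := card_union_le bad₁ bad₂; nlinarith)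
  simp only [mem_union, not_or, bad₁, bad₂, mem_filter, mem_univ, true_and, not_not,
    not_exists, not_and, not_forall, ne_eq, not_not] at hf
  refine ⟨labelGraph f, hf.1, hdense, fun S hS => ?_⟩
  by_contra! hS_large
  obtain ⟨e⟩ := Embedding.nonempty_of_card_le (α := Bool × κ × Bool) (β := (S : Set V))
    (by simp only [Fintype.card_prod, Fintype.card_bool, coe_sort_coe, Fintype.card_coe]; omega)
  have hg : Injective fun x => (e x : V) := Subtype.val_injective.comp e.injective
  obtain ⟨p, hp⟩ := hf.2 _ hg
  exact not_c4Free_induce_of_crossBlock hg (fun x => (e x).2) hp hS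

end Construction

section AverageDegree

variable {W : Type*} [Fintype W] {H : SimpleGraph W}

lemma avgDeg_eq_sum_degree_div [DecidableRel H.Adj] :
    avgDeg H = (∑ v, H.degree v : ℕ) / Fintype.card W := by
  classical
  rw [avgDeg, Nat.card_eq_fintype_card, sum_degrees_eq_twice_card_edges, ← coe_edgeFinset,
    Set.ncard_coe_finset]
  push_cast
  rfl

lemma sub_one_div_le_avgDeg {r : ℕ} (hr : 0 < r)
    (h : (Fintype.card W).choose 2 ≤ 2 * r * H.edgeSet.ncard) :
    ((Fintype.card W : ℝ) - 1) / (2 * r) ≤ avgDeg H := by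
  rw [avgDeg, Nat.card_eq_fintype_card]
  rcases Nat.eq_zero_or_pos (Fintype.card W) with hW | hW
  · simp only [hW, CharP.cast_eq_zero, div_zero]
    exact div_nonpos_of_nonpos_of_nonneg (by norm_num) (by positivity)
  have h' : ((Fintype.card W : ℝ) * (Fintype.card W - 1)) / 2 ≤ 2 * r * H.edgeSet.ncard := by
    rw [← Nat.cast_choose_two]; exact_mod_cast h
  rw [div_le_div_iff₀ (by positivity) (by positivity)]
  nlinarith

lemma C4Free.sum_degree_mul_degree_sub_one_le_s14 [DecidableRel H.Adj] (hH : C4Free H) :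
    ∑ v, H.degree v * (H.degree v - 1) ≤ Fintype.card W * (Fintype.card W - 1) := by
  classical
  -- two cherries `a - v - b` and `a - w - b` with `v ≠ w` would form a `C₄`
  have hinj : Set.InjOn (fun x : Σ _ : W, W × W => x.2)
      ↑(univ.sigma fun v => (H.neighborFinset v).offDiag) := by
    rintro ⟨v, a, b⟩ hv ⟨w, a', b'⟩ hw h
    obtain ⟨rfl, rfl⟩ := Prod.mk.inj h
    simp only [coe_sigma, Set.mem_sigma_iff, coe_univ, Set.mem_univ, mem_coe, mem_offDiag,
      mem_neighborFinset, true_and] at hv hw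
    by_contra hvw
    exact hH ⟨a, b, v, w, hv.2.2, fun h => hvw (by rw [h]), hv.1.symm, hv.2.1.symm, hw.1.symm,
      hw.2.1.symm⟩
  calc ∑ v, H.degree v * (H.degree v - 1)
      = #(univ.sigma fun v => (H.neighborFinset v).offDiag) := by
        simp [card_sigma, offDiag_card, Nat.mul_sub_one]
    _ ≤ #(univ : Finset W).offDiag :=
        card_le_card_of_injOn _ (fun x hx => by simp_all) hinj
    _ = Fintype.card W * (Fintype.card W - 1) := by simp [offDiag_card, Nat.mul_sub_one]

lemma C4Free.avgDeg_mul_avgDeg_sub_one_le_s14 [Nonempty W] (hH : C4Free H) :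
    avgDeg H * (avgDeg H - 1) ≤ Fintype.card W - 1 := by
  classical
  set M := Fintype.card W
  set D := ∑ v, H.degree v
  have hM : 0 < M := Fintype.card_pos
  have hsq : ∑ v, H.degree v ^ 2 ≤ M * (M - 1) + D := by
    have hd (v : W) : H.degree v ^ 2 = H.degree v * (H.degree v - 1) + H.degree v := by
      cases H.degree v <;> simp [sq, Nat.mul_succ]
    simp only [hd, sum_add_distrib]
    exact Nat.add_le_add_right hH.sum_degree_mul_degree_sub_one_le_s14 _
  have hCS : D ^ 2 ≤ M * (M * (M - 1) + D) :=
    calc D ^ 2 ≤ #univ * ∑ v, H.degree v ^ 2 := sq_sum_le_card_mul_sum_sq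
      _ ≤ M * (M * (M - 1) + D) := Nat.mul_le_mul_left _ hsq
  have hCS' : (D : ℝ) ^ 2 ≤ M * (M * (M - 1) + D) := by
    have := (Nat.cast_le (α := ℝ)).mpr hCS
    rwa [Nat.cast_pow, Nat.cast_mul, Nat.cast_add, Nat.cast_mul, Nat.cast_pred hM] at this
  rw [avgDeg_eq_sum_degree_div]
  have hMR : (0 : ℝ) < M := by exact_mod_cast hM
  rw [div_sub_one hMR.ne', div_mul_div_comm, div_le_iff₀ (by positivity)]
  nlinarith

lemma C4Free.avgDeg_lt {k : ℕ} (hH : C4Free H)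
    (hW : Fintype.card W < k * (k - 1)) : avgDeg H < k := by
  have hk : 2 ≤ k := by rcases k with _ | _ | k <;> simp_all
  cases isEmpty_or_nonempty W with
  | inl _ => simp [avgDeg]; omega
  | inr _ =>
    have hW' : (Fintype.card W : ℝ) + 1 ≤ k * (k - 1) := by
      rw [← Nat.cast_pred (by omega)]
      exact_mod_cast hW
    have h := hH.avgDeg_mul_avgDeg_sub_one_le_s14
    by_contra! hle
    have : (2 : ℝ) ≤ k := by exact_mod_cast hk
    nlinarith

end AverageDegree

section Parameters

lemma two_mul_pred_pow_le {Q : ℕ} (hQ : 0 < Q) : 2 * (Q - 1) ^ Q ≤ Q ^ Q := by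
  have hbern := pow_add_mul_le_add_pow (Nat.zero_le (Q - 1)) (b := 1) (by omega) Q
  rw [Nat.sub_add_cancel hQ, mul_one, Nat.cast_id] at hbern
  have : (Q - 1) ^ Q ≤ Q * (Q - 1) ^ (Q - 1) := by
    rw [← Nat.succ_pred_eq_of_pos hQ, pow_succ', Nat.pred_eq_sub_one, Nat.add_one_sub_one]
    exact Nat.mul_le_mul_right _ (Nat.le_succ _)
  omega

lemma two_pow_div_mul_pred_pow_le (Q T : ℕ) : 2 ^ (T / Q) * (Q - 1) ^ T ≤ Q ^ T := by
  rcases Nat.eq_zero_or_pos Q with rfl | hQ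
  · simp
  have hT := (Nat.div_add_mod T Q).symm
  set s := T / Q
  rw [hT, pow_add, pow_add, pow_mul, pow_mul, ← mul_assoc, ← mul_pow]
  exact Nat.mul_le_mul (Nat.pow_le_pow_left (two_mul_pred_pow_le hQ) _)
    (Nat.pow_le_pow_left (Nat.sub_le _ _) _)

lemma four_mul_mul_pow_pow_le {q e k : ℕ} (hq : 4 ≤ q) (he : 2 * e + 2 ≤ k) :
    4 * q * (q ^ e) ^ (2 * k) ≤ q ^ (k * k) :=
  calc 4 * q * (q ^ e) ^ (2 * k) ≤ q ^ 2 * q ^ (e * (2 * k)) := by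
        rw [← pow_mul]; gcongr; nlinarith
    _ = q ^ (2 + e * (2 * k)) := by rw [pow_add]
    _ ≤ q ^ (k * k) := Nat.pow_le_pow_right (by omega) (by nlinarith)

lemma pow_four_mul_le_mul_self {q e k a : ℕ} (hq : 256 ≤ q) (hqk : q ^ 8 ≤ k) (he : 2 * e ≤ k)
    (ha : k * (k - 1) ≤ 4 * a + 3) : q ^ 4 * (2 + q * (1 + 4 * a * e)) ≤ a * a := by
  obtain ⟨j, rfl⟩ : ∃ j, k = j + 1 := ⟨k - 1, by have := Nat.one_le_pow 8 q (by omega); omega⟩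
  rw [Nat.add_sub_cancel] at ha
  set P := q ^ 5
  have hP : 2 ^ 24 * P ≤ j + 1 := by
    calc 2 ^ 24 * P ≤ q ^ 3 * P :=
          Nat.mul_le_mul_right P ((by norm_num : 2 ^ 24 ≤ 256 ^ 3).trans (Nat.pow_le_pow_left hq 3))
      _ = q ^ 8 := by ring
      _ ≤ j + 1 := hqk
  have hq4 : q ^ 4 ≤ P := Nat.pow_le_pow_right (by omega) (by norm_num)
  have haP : 4 * P * (j + 1) ≤ a := by nlinarith
  have hja : 2 ≤ (j + 1) * a := by
    have : 1 ≤ P := Nat.one_le_pow _ _ (by omega)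
    nlinarith
  calc q ^ 4 * (2 + q * (1 + 4 * a * e)) = 2 * q ^ 4 + P + 2 * P * a * (2 * e) := by ring
    _ ≤ 2 * P + P + 2 * P * a * (j + 1) := by gcongr
    _ ≤ 4 * P * (j + 1) * a := by nlinarith [Nat.mul_le_mul_left P hja]
    _ ≤ a * a := Nat.mul_le_mul_right a haP

lemma four_mul_mul_pow_mul_pred_pow_le {q e k a : ℕ} (hq : 256 ≤ q) (hqk : q ^ 8 ≤ k)
    (he : 2 * e ≤ k) (ha : k * (k - 1) ≤ 4 * a + 3) :
    4 * q * (q ^ e) ^ (4 * a) * (q ^ 4 - 1) ^ (a * a) ≤ (q ^ 4) ^ (a * a) := by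
  have hpow : 4 * q * (q ^ e) ^ (4 * a) ≤ 2 ^ (a * a / q ^ 4) :=
    calc 4 * q * (q ^ e) ^ (4 * a) = 2 ^ 2 * q ^ (1 + 4 * a * e) := by ring
      _ ≤ 2 ^ 2 * (2 ^ q) ^ (1 + 4 * a * e) := by gcongr; exact Nat.lt_two_pow_self.le
      _ = 2 ^ (2 + q * (1 + 4 * a * e)) := by rw [← pow_mul, ← pow_add]
      _ ≤ 2 ^ (a * a / q ^ 4) := Nat.pow_le_pow_right (by norm_num) <|
        (Nat.le_div_iff_mul_le (by positivity)).mpr <| by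
          rw [mul_comm]; exact pow_four_mul_le_mul_self hq hqk he ha
  calc _ ≤ 2 ^ (a * a / q ^ 4) * (q ^ 4 - 1) ^ (a * a) := Nat.mul_le_mul_right _ hpow
    _ ≤ _ := two_pow_div_mul_pred_pow_le _ _

lemma two_mul_mul_pow_add_one_le {q k c e : ℕ} (hq : 256 ≤ q) (hk : k < (q + 1) ^ 8)
    (he : 9 * c + 3 ≤ e) : 2 * q * k ^ c + 1 ≤ q ^ e := by
  have hk : k ^ c ≤ q ^ (9 * c) :=
    calc k ^ c ≤ ((2 * q) ^ 8) ^ c := Nat.pow_le_pow_left (hk.le.trans (by gcongr; omega)) c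
      _ = (2 ^ 8) ^ c * q ^ (8 * c) := by ring
      _ ≤ q ^ c * q ^ (8 * c) := by gcongr; norm_num; exact hq
      _ = q ^ (9 * c) := by ring
  have h1 : 2 * q * k ^ c ≤ q ^ (9 * c + 2) :=
    calc 2 * q * k ^ c ≤ q * q * q ^ (9 * c) := by gcongr; omega
      _ = q ^ (9 * c + 2) := by ring
  have h2 : 1 ≤ q ^ (9 * c + 2) := Nat.one_le_pow _ _ (by omega)
  calc 2 * q * k ^ c + 1 ≤ 2 * q ^ (9 * c + 2) := by omega
    _ ≤ q * q ^ (9 * c + 2) := by gcongr; omega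
    _ = q ^ (9 * c + 3) := by ring
    _ ≤ q ^ e := Nat.pow_le_pow_right (by omega) he

lemma rpow_div_le_pow_div_add_one {x : ℝ} (hx : 1 ≤ x) (n : ℕ) {d : ℕ} (hd : 0 < d) :
    x ^ ((n : ℝ) / d) ≤ x ^ (n / d + 1) := by
  rw [← Real.rpow_natCast]
  refine Real.rpow_le_rpow_of_exponent_le hx ?_
  have : (n : ℝ) < (n / d : ℕ) * d + d := by exact_mod_cast Nat.lt_div_mul_add hd
  rw [div_le_iff₀ (by positivity)]
  push_cast
  linarith

end Parameters

/-- Corollary 6.5 (Theorem 1.3(a)): for all sufficiently large `k` there is a `K_{k,k}`-free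
graph of average degree at least `k^(k/21)` in which every induced `C₄`-free subgraph has
average degree less than `k`; that is, `f_Ind(k,k) ≥ k^(k/21)`. -/
theorem diagonal_lower_bound :
    ∃ k₀ : ℕ, ∀ k : ℕ, k₀ ≤ k →
      ∃ (n : ℕ) (G : SimpleGraph (Fin n)),
        KssFree G k ∧ ((k : ℝ) ^ ((k : ℝ) / 21)) ≤ avgDeg G ∧
        ∀ S : Finset (Fin n), C4Free (G.induce (S : Set (Fin n))) →
          avgDeg (G.induce (S : Set (Fin n))) < k := by
  refine ⟨2 ^ 64, fun k hk => ?_⟩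
  set q := Nat.nthRoot 8 k
  have hqk : q ^ 8 ≤ k := Nat.pow_nthRoot_le_iff.mpr (Or.inl (by norm_num))
  have hkq : k < (q + 1) ^ 8 := Nat.lt_pow_nthRoot_add_one (by norm_num) k
  have hq : 256 ≤ q := (Nat.le_nthRoot_iff (by norm_num)).mpr (by norm_num; omega)
  have : NeZero q := ⟨by omega⟩
  set e := k / 2 - 1
  set a := k * (k - 1) / 4
  have ha : k * (k - 1) ≤ 4 * a + 3 := by omega
  have ha' : 4 * a ≤ k * (k - 1) := by omega
  obtain ⟨G, hG, hdense, hsparse⟩ := exists_kssFree_le_card_edgeSet_c4Free_induce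
    (V := Fin (q ^ e)) (α := Fin q) (κ := Fin a) k
    (by simpa using Nat.succ_le_of_lt (Nat.one_lt_pow (by omega : e ≠ 0) (by omega : 1 < q)))
    (by simpa using four_mul_mul_pow_pow_le (by omega : 4 ≤ q) (by omega : 2 * e + 2 ≤ k))
    (by simpa using four_mul_mul_pow_mul_pred_pow_le hq hqk (by omega : 2 * e ≤ k) ha)
  refine ⟨q ^ e, G, hG, ?_, fun S hS => hS.avgDeg_lt ?_⟩
  · have hn := two_mul_mul_pow_add_one_le hq hkq (by omega : 9 * (k / 21 + 1) + 3 ≤ e)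
    calc (k : ℝ) ^ ((k : ℝ) / 21) ≤ (k : ℝ) ^ (k / 21 + 1) :=
          rpow_div_le_pow_div_add_one (by norm_cast; omega) k (by norm_num)
      _ ≤ ((q ^ e : ℕ) - 1) / (2 * q) := by
          rw [le_div_iff₀ (by positivity), le_sub_iff_add_le]
          exact_mod_cast (by linarith : k ^ (k / 21 + 1) * (2 * q) + 1 ≤ q ^ e)
      _ ≤ avgDeg G := by
          simpa using sub_one_div_le_avgDeg (H := G) (by omega) (by simpa using hdense)
  · simpa using (hsparse S hS).trans_le (by simpa using ha')
end

section
/- Every finite simple C_4-free graph G on n vertices contains an independent set of size at least n/(3 + √n). -/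
open SimpleGraph

/-! In a `C₄`-free graph two distinct vertices have at most one common neighbour, so inside any
vertex set `S` the sets of ordered pairs of distinct neighbours of the vertices of `S` are pairwise
disjoint. Hence some `v ∈ S` has `d(d - 1) ≤ |S| - 1 < n` neighbours in `S`, i.e. `d ≤ 1 + √n`:
the graph is `(1 + √n)`-degenerate, and the greedy algorithm (take a vertex of small degree,
discard its neighbours, repeat) finds an independent set of size at least `n / (2 + √n)`. -/

namespace SimpleGraph

open Finset

variable {V : Type*} {G : SimpleGraph V}

lemma ncard_neighborSet_inter_finset [DecidableRel G.Adj] (S : Finset V) (v : V) :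
    (G.neighborSet v ∩ ↑S).ncard = #{w ∈ S | G.Adj v w} := by
  rw [← Set.ncard_coe_finset]
  congr 1
  ext w
  simp [and_comm]

lemma IsDegenerate.exists_isIndepSet [DecidableEq V] [DecidableRel G.Adj] {d : ℝ}
    (hG : IsDegenerate G d) (S : Finset V) :
    ∃ I ⊆ S, G.IsIndepSet ↑I ∧ (#S : ℝ) ≤ #I * (d + 1) := by
  induction S using Finset.strongInduction with
  | H S ih =>
  rcases S.eq_empty_or_nonempty with rfl | hS
  · exact ⟨∅, subset_rfl, by simp, by simp⟩
  obtain ⟨v, hvS, hdeg⟩ := hG S hS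
  rw [ncard_neighborSet_inter_finset] at hdeg
  set N := {w ∈ S | G.Adj v w}
  have hvN : v ∉ N := by simp [N]
  have hNS : insert v N ⊆ S := insert_subset hvS (filter_subset _ S)
  obtain ⟨I, hIS, hI, hcard⟩ := ih (S \ insert v N) (sdiff_ssubset hNS (insert_nonempty v N))
  have hvI : v ∉ I := fun h => (mem_sdiff.1 (hIS h)).2 (mem_insert_self v N)
  have hnotAdj : ∀ w ∈ I, ¬ G.Adj v w := fun w hw hvw =>
    (mem_sdiff.1 (hIS hw)).2 (mem_insert_of_mem (by simp [N, (mem_sdiff.1 (hIS hw)).1, hvw]))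
  refine ⟨insert v I, insert_subset hvS (hIS.trans sdiff_subset), ?_, ?_⟩
  · rw [coe_insert]
    exact hI.insert fun w hw _ => ⟨hnotAdj w hw, fun h => hnotAdj w hw h.symm⟩
  · have hsplit : #S ≤ #(S \ insert v N) + (#N + 1) :=
      card_le_card_sdiff_add_card.trans_eq (by rw [card_insert_of_notMem hvN])
    rw [card_insert_of_notMem hvI]
    push_cast
    calc (#S : ℝ) ≤ #(S \ insert v N) + (#N + 1) := by exact_mod_cast hsplit
      _ ≤ #I * (d + 1) + (d + 1) := by gcongr
      _ = (#I + 1) * (d + 1) := by ring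

lemma C4Free.disjoint_offDiag_filter_adj [DecidableRel G.Adj] (hG : C4Free G) (S : Finset V)
    {v w : V} (hvw : v ≠ w) :
    Disjoint {a ∈ S | G.Adj v a}.offDiag {a ∈ S | G.Adj w a}.offDiag := by
  rw [Finset.disjoint_left]
  rintro ⟨a, b⟩ hv hw
  simp only [mem_offDiag, mem_filter] at hv hw
  exact hG ⟨v, w, a, b, hvw, hv.2.2, hv.1.2, hw.1.2, hv.2.1.2, hw.2.1.2⟩

lemma C4Free.sum_card_offDiag_filter_adj_le [DecidableEq V] [DecidableRel G.Adj] (hG : C4Free G)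
    (S : Finset V) : ∑ v ∈ S, #{a ∈ S | G.Adj v a}.offDiag ≤ #S.offDiag := by
  rw [← card_biUnion fun v _ w _ hvw => hG.disjoint_offDiag_filter_adj S hvw]
  exact card_le_card <| biUnion_subset.2 fun v _ => offDiag_mono (filter_subset _ S)

lemma C4Free.exists_card_offDiag_filter_adj_le [DecidableEq V] [DecidableRel G.Adj]
    (hG : C4Free G) {S : Finset V} (hS : S.Nonempty) :
    ∃ v ∈ S, #{a ∈ S | G.Adj v a}.offDiag ≤ #S - 1 := by
  refine exists_le_of_sum_le hS ((hG.sum_card_offDiag_filter_adj_le S).trans_eq ?_)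
  rw [offDiag_card, sum_const, smul_eq_mul, Nat.mul_sub_one]

lemma le_one_add_sqrt_of_mul_sub_le {d n : ℕ} (h : d * d - d ≤ n) : (d : ℝ) ≤ 1 + √n := by
  rcases Nat.eq_zero_or_pos d with rfl | hd
  · push_cast
    positivity
  have hsq : ((d : ℝ) - 1) ^ 2 ≤ n := by
    have hd' : (1 : ℝ) ≤ d := by exact_mod_cast hd
    have : ((d * d - d : ℕ) : ℝ) ≤ n := by exact_mod_cast h
    rw [Nat.cast_sub (Nat.le_mul_self d), Nat.cast_mul] at this
    nlinarith
  linarith [(le_abs_self _).trans (Real.abs_le_sqrt hsq)]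

lemma C4Free.isDegenerate [Fintype V] (hG : C4Free G) :
    IsDegenerate G (1 + √(Fintype.card V)) := by
  classical
  intro S hS
  obtain ⟨v, hvS, hv⟩ := hG.exists_card_offDiag_filter_adj_le hS
  refine ⟨v, hvS, ?_⟩
  rw [ncard_neighborSet_inter_finset]
  apply le_one_add_sqrt_of_mul_sub_le
  rw [← offDiag_card]
  exact hv.trans ((Nat.sub_le _ 1).trans (card_le_univ S))

end SimpleGraph

/-- Proposition 6.7: any `n`-vertex `C₄`-free graph has an independent set of size at least
`n / (3 + √n)`. -/
theorem C4_free_independent_set (V : Type) [Fintype V] (G : SimpleGraph V)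
    (hC4 : C4Free G) :
    ∃ I : Finset V, (∀ a ∈ I, ∀ b ∈ I, ¬ G.Adj a b) ∧
      (Fintype.card V : ℝ) / (3 + Real.sqrt (Fintype.card V)) ≤ (I.card : ℝ) := by
  classical
  obtain ⟨I, -, hI, hcard⟩ := hC4.isDegenerate.exists_isIndepSet Finset.univ
  refine ⟨I, fun a ha b hb hab => hI ha hb hab.ne hab, ?_⟩
  rw [Finset.card_univ] at hcard
  rw [div_le_iff₀ (by positivity)]
  linarith
end

section
/- Let k ≥ 1 be a real number and let G be a finite simple C_4-free graph with average degree d(G) ≥ k. Then the independence number of G satisfies α(G) ≥ (k−1)²/(k+2); in particular, α(G) ≥ k − 4. -/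
/-! If two distinct vertices had two distinct common neighbours they would span a `C₄`, so the
sets of ordered pairs of distinct neighbours of the vertices are pairwise disjoint and
`∑ d(v) (d(v) - 1) ≤ n (n - 1)`; with Cauchy–Schwarz this gives `n ≥ D² - D + 1` for the average
degree `D`. The Caro–Wei bound `α ≥ ∑ 1 / (d(v) + 1)`, again with Cauchy–Schwarz, gives
`α ≥ n / (D + 1) ≥ (D² - D + 1) / (D + 1)`, and this exceeds `(k - 1)² / (k + 2) ≥ k - 4`
whenever `D ≥ k ≥ 1`. -/

open SimpleGraph

open Finset

namespace SimpleGraph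

variable {V : Type*} [Fintype V] (G : SimpleGraph V) [DecidableRel G.Adj]

theorem exists_isIndepSet_subset_sum_inv_degree_le [DecidableEq V] (S : Finset V) :
    ∃ I ⊆ S, G.IsIndepSet I ∧
      ∑ v ∈ S, 1 / ((#(G.neighborFinset v ∩ S) : ℝ) + 1) ≤ #I := by
  induction S using Finset.strongInduction with
  | _ S ih =>
  rcases S.eq_empty_or_nonempty with rfl | hS
  · exact ⟨∅, subset_refl _, by simp⟩
  -- Greedily keep a vertex `v` of minimum degree in `S`, then discard its closed neighbourhood.
  obtain ⟨v, hvS, hvmin⟩ := S.exists_min_image (fun u => #(G.neighborFinset u ∩ S)) hS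
  set N := insert v (G.neighborFinset v)
  obtain ⟨I, hIS, hI, hsum⟩ :=
    ih (S \ N) ⟨sdiff_subset, fun h => (mem_sdiff.1 (h hvS)).2 (mem_insert_self _ _)⟩
  have hvI : v ∉ I := fun h => (mem_sdiff.1 (hIS h)).2 (mem_insert_self _ _)
  have hI_nadj : ∀ u ∈ I, ¬ G.Adj v u := fun u hu hvu =>
    (mem_sdiff.1 (hIS hu)).2 (mem_insert_of_mem ((G.mem_neighborFinset v u).2 hvu))
  have hN : ∑ u ∈ S ∩ N, 1 / ((#(G.neighborFinset u ∩ S) : ℝ) + 1) ≤ 1 := by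
    have hcard : #(S ∩ N) ≤ #(G.neighborFinset v ∩ S) + 1 := by
      refine (card_le_card fun u hu => ?_).trans (card_insert_le v (G.neighborFinset v ∩ S))
      rw [mem_inter, mem_insert] at hu
      rw [mem_insert, mem_inter]
      tauto
    calc ∑ u ∈ S ∩ N, 1 / ((#(G.neighborFinset u ∩ S) : ℝ) + 1)
        ≤ #(S ∩ N) • (1 / ((#(G.neighborFinset v ∩ S) : ℝ) + 1)) := by
          refine sum_le_card_nsmul _ _ _ fun u hu => ?_
          refine one_div_le_one_div_of_le (by positivity) ?_
          exact_mod_cast Nat.add_le_add_right (hvmin u (mem_inter.1 hu).1) 1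
      _ ≤ 1 := by
          rw [nsmul_eq_mul, mul_one_div, div_le_one (by positivity)]
          exact_mod_cast hcard
  have hrest : ∑ u ∈ S \ N, 1 / ((#(G.neighborFinset u ∩ S) : ℝ) + 1) ≤ #I := by
    refine le_trans (sum_le_sum fun u _ => ?_) hsum
    gcongr
    exact sdiff_subset
  refine ⟨insert v I, insert_subset hvS (hIS.trans sdiff_subset), ?_, ?_⟩
  · rw [coe_insert, ← isClique_compl, isClique_insert]
    exact ⟨(isClique_compl G).2 hI, fun u hu hvu => ⟨hvu, hI_nadj u hu⟩⟩
  · rw [← sum_inter_add_sum_sdiff S N (fun u => 1 / ((#(G.neighborFinset u ∩ S) : ℝ) + 1)),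
      card_insert_of_notMem hvI]
    push_cast
    linarith

theorem sum_degree_eq_card_mul_avgDeg :
    ∑ v, (G.degree v : ℝ) = Fintype.card V * avgDeg G := by
  rw [avgDeg, Nat.card_eq_fintype_card, ← coe_edgeFinset, Set.ncard_coe_finset]
  rcases isEmpty_or_nonempty V with hV | hV
  · simp
  · rw [mul_div_cancel₀ _ (by positivity)]
    exact_mod_cast G.sum_degrees_eq_twice_card_edges

omit [DecidableRel G.Adj] in
theorem exists_isIndepSet_card_div_avgDeg_add_one_le :
    ∃ I : Finset V, G.IsIndepSet I ∧ Fintype.card V / (avgDeg G + 1) ≤ #I := by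
  classical
  obtain ⟨I, -, hI, hsum⟩ := G.exists_isIndepSet_subset_sum_inv_degree_le univ
  refine ⟨I, hI, le_trans ?_ hsum⟩
  simp only [inter_univ, card_neighborFinset_eq_degree]
  rcases isEmpty_or_nonempty V with hV | hV
  · simp
  have hCS := sq_sum_div_le_sum_sq_div univ (fun _ => (1 : ℝ))
    (g := fun v => (G.degree v : ℝ) + 1) fun v _ => by positivity
  have hn : (Fintype.card V : ℝ) ≠ 0 := by positivity
  rw [sum_add_distrib, sum_degree_eq_card_mul_avgDeg] at hCS
  simp only [sum_const, card_univ, nsmul_eq_mul, mul_one, one_pow] at hCS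
  rwa [sq, ← mul_add_one, mul_div_mul_left _ _ hn] at hCS

end SimpleGraph

namespace C4Free

open SimpleGraph

variable {V : Type*} [Fintype V] [DecidableEq V] {G : SimpleGraph V} [DecidableRel G.Adj]

theorem sum_card_offDiag_neighborFinset_le (hG : C4Free G) :
    ∑ v, #(G.neighborFinset v).offDiag ≤ #(univ : Finset V).offDiag := by
  rw [← card_biUnion]
  · exact card_le_card (biUnion_subset.2 fun v _ => offDiag_mono (subset_univ _))
  · intro v _ w _ hvw
    rw [Function.onFun, Finset.disjoint_left]
    rintro ⟨a, b⟩ hv hw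
    simp only [mem_offDiag, mem_neighborFinset] at hv hw
    exact hG ⟨a, b, v, w, hv.2.2, hvw, hv.1.symm, hv.2.1.symm, hw.1.symm, hw.2.1.symm⟩

theorem sum_degree_sq_le (hG : C4Free G) :
    ∑ v, (G.degree v : ℝ) ^ 2 ≤
      (Fintype.card V : ℝ) ^ 2 - Fintype.card V + ∑ v, (G.degree v : ℝ) := by
  have cast_mul_self_sub (m : ℕ) : ((m * m - m : ℕ) : ℝ) = (m : ℝ) ^ 2 - m := by
    rw [Nat.cast_sub (Nat.le_mul_self m)]
    push_cast
    ring
  have h := (Nat.cast_le (α := ℝ)).2 hG.sum_card_offDiag_neighborFinset_le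
  simp only [offDiag_card, card_neighborFinset_eq_degree, card_univ, Nat.cast_sum,
    cast_mul_self_sub, sum_sub_distrib] at h
  linarith

omit [DecidableEq V] [DecidableRel G.Adj] in
theorem avgDeg_sq_sub_avgDeg_add_one_le_card [Nonempty V] (hG : C4Free G) :
    avgDeg G ^ 2 - avgDeg G + 1 ≤ Fintype.card V := by
  classical
  have hn : (0 : ℝ) < Fintype.card V := by positivity
  have hCS := sq_sum_le_card_mul_sum_sq (s := univ) (f := fun v => (G.degree v : ℝ))
  have hC4 := hG.sum_degree_sq_le
  rw [card_univ, G.sum_degree_eq_card_mul_avgDeg] at hCS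
  rw [G.sum_degree_eq_card_mul_avgDeg] at hC4
  have h : (Fintype.card V : ℝ) ^ 2 * (avgDeg G ^ 2 - avgDeg G + 1) ≤
      (Fintype.card V : ℝ) ^ 2 * Fintype.card V := by
    nlinarith [mul_le_mul_of_nonneg_left hC4 hn.le]
  exact le_of_mul_le_mul_left h (by positivity)

end C4Free

/-- `(D² - D + 1) / (D + 1) = D - 2 + 3 / (D + 1)` is increasing for `D ≥ 1` and already exceeds
`(k - 1)² / (k + 2) = k - 4 + 9 / (k + 2)` at `D = k`. -/
theorem sub_one_sq_div_add_two_le {k D : ℝ} (hk : 1 ≤ k) (hkD : k ≤ D) :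
    (k - 1) ^ 2 / (k + 2) ≤ (D ^ 2 - D + 1) / (D + 1) := by
  rw [div_le_div_iff₀ (by linarith) (by linarith)]
  nlinarith [mul_nonneg (sub_nonneg.2 hk) (sub_nonneg.2 hkD),
    mul_nonneg (mul_nonneg (sub_nonneg.2 hk) (sub_nonneg.2 hk)) (sub_nonneg.2 hkD),
    mul_nonneg (sub_nonneg.2 hkD) (sub_nonneg.2 hkD)]

theorem sub_four_le_sub_one_sq_div_add_two {k : ℝ} (hk : -2 < k) :
    k - 4 ≤ (k - 1) ^ 2 / (k + 2) := by
  rw [le_div_iff₀ (by linarith)]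
  nlinarith

/-- Corollary 6.8: any `C₄`-free graph of average degree at least `k ≥ 1` has independence
number at least `(k-1)²/(k+2)`, and in particular at least `k - 4`. -/
theorem C4_free_large_independence_number (k : ℝ) (hk : 1 ≤ k)
    (V : Type) [Fintype V] (G : SimpleGraph V)
    (hC4 : C4Free G) (hdeg : k ≤ avgDeg G) :
    ∃ I : Finset V, (∀ a ∈ I, ∀ b ∈ I, ¬ G.Adj a b) ∧
      (k - 1) ^ 2 / (k + 2) ≤ (I.card : ℝ) ∧ k - 4 ≤ (I.card : ℝ) := by
  have : Nonempty V := by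
    by_contra hV
    rw [not_nonempty_iff] at hV
    simp [avgDeg] at hdeg
    linarith
  obtain ⟨I, hI, hcard⟩ := G.exists_isIndepSet_card_div_avgDeg_add_one_le
  have hα : (k - 1) ^ 2 / (k + 2) ≤ #I := calc
    _ ≤ (avgDeg G ^ 2 - avgDeg G + 1) / (avgDeg G + 1) := sub_one_sq_div_add_two_le hk hdeg
    _ ≤ Fintype.card V / (avgDeg G + 1) :=
      div_le_div_of_nonneg_right hC4.avgDeg_sq_sub_avgDeg_add_one_le_card (by linarith)
    _ ≤ #I := hcard
  refine ⟨I, fun a ha b hb hab => hI ha hb (G.ne_of_adj hab) hab, hα, ?_⟩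
  exact (sub_four_le_sub_one_sq_div_add_two (by linarith)).trans hα
end
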